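/- arXiv:2403.00002 — 3 statements merged into one kernel-verified Lean document; each statement's English description precedes it below -/
import Mathlib

section
/- Let n ≥ 1, c > 0, q > 0, and let u : ℝⁿ × [0,∞) → ℝ be a smooth positive solution of ∂ₜu = Δu + c·u(1−u). Then W := u^{−q} satisfies, at every point, ΔW − ∂ₜW = ((q+1)/q)·|∇W|²/W + c·q·W − c·q·W^{(q−1)/q}. -/
/-- Partial derivative in the `i`-th coordinate direction. -/
noncomputable def pd {n : ℕ} (i : Fin n) (f : (Fin n → ℝ) → ℝ) (x : Fin n → ℝ) : ℝ :=
  fderiv ℝ f x (Pi.single i 1)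

/-- Euclidean Laplacian: sum of second partial derivatives. -/
noncomputable def lap {n : ℕ} (f : (Fin n → ℝ) → ℝ) (x : Fin n → ℝ) : ℝ :=
  ∑ i, pd i (pd i f) x

/-- Euclidean specialization of Lemma 3.1: for a smooth positive solution `u` of the
Fisher–KPP equation `∂ₜu = Δu + c·u(1−u)`, the function `W = u^{-q}` satisfies
`ΔW − ∂ₜW = ((q+1)/q)·|∇W|²/W + cqW − cqW^{(q−1)/q}`. -/
theorem fisher_kpp_W_equation (n : ℕ) (hn : 1 ≤ n) (c q : ℝ) (hc : 0 < c) (hq : 0 < q)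
    (u : ℝ → (Fin n → ℝ) → ℝ)
    (hu : ContDiff ℝ (⊤ : ℕ∞) (fun p : ℝ × (Fin n → ℝ) => u p.1 p.2))
    (hpos : ∀ t x, 0 ≤ t → 0 < u t x)
    (hpde : ∀ t x, 0 ≤ t →
      deriv (fun τ => u τ x) t = lap (u t) x + c * u t x * (1 - u t x)) :
    ∀ t x, 0 ≤ t →
      lap (fun y => u t y ^ (-q : ℝ)) x - deriv (fun τ => u τ x ^ (-q : ℝ)) t =
        ((q + 1) / q) * (∑ i, (pd i (fun y => u t y ^ (-q : ℝ)) x) ^ 2)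
            / (u t x ^ (-q : ℝ))
          + c * q * (u t x ^ (-q : ℝ))
          - c * q * ((u t x ^ (-q : ℝ)) ^ ((q - 1) / q)) := by
  intro t x ht
  -- the spatial slice
  set v : (Fin n → ℝ) → ℝ := u t with hvdef
  have hv_cd : ContDiff ℝ (⊤ : ℕ∞) v := by
    have : v = (fun p : ℝ × (Fin n → ℝ) => u p.1 p.2) ∘ (fun y => (t, y)) := rfl
    rw [this]
    exact hu.comp (contDiff_const.prodMk contDiff_id)
  have hvpos : ∀ y, 0 < v y := fun y => hpos t y ht
  have hdv : ∀ y, DifferentiableAt ℝ v y := fun y => hv_cd.differentiable (by simp) y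
  -- pd i v is smooth
  have hpd_cd : ∀ i : Fin n, ContDiff ℝ (⊤ : ℕ∞) (pd i v) := by
    intro i
    have h1 : ContDiff ℝ (⊤ : ℕ∞) (fderiv ℝ v) := hv_cd.fderiv_right (by simp)
    exact (ContinuousLinearMap.apply ℝ ℝ (Pi.single i 1 : Fin n → ℝ)).contDiff.comp h1
  -- first spatial derivative of W
  have hW1 : ∀ y : Fin n → ℝ, HasFDerivAt (fun z => v z ^ (-q : ℝ))
      (((-q) * v y ^ ((-q) - 1 : ℝ)) • fderiv ℝ v y) y := by
    intro y
    exact ((hdv y).hasFDerivAt).rpow_const (Or.inl (hvpos y).ne')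
  have hpdW : ∀ (i : Fin n) (y : Fin n → ℝ),
      pd i (fun z => v z ^ (-q : ℝ)) y = (-q) * v y ^ ((-q) - 1 : ℝ) * pd i v y := by
    intro i y
    have := (hW1 y).fderiv
    simp only [pd, this, ContinuousLinearMap.smul_apply, smul_eq_mul]
  -- second spatial derivative
  have hW2 : ∀ (i : Fin n),
      pd i (pd i (fun z => v z ^ (-q : ℝ))) x =
        (-q) * v x ^ ((-q) - 1 : ℝ) * pd i (pd i v) x +
        pd i v x * ((-q) * (((-q) - 1) * v x ^ ((-q) - 1 - 1 : ℝ) * pd i v x)) := by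
    intro i
    have hfun : pd i (fun z => v z ^ (-q : ℝ)) =
        fun y => (-q) * v y ^ ((-q) - 1 : ℝ) * pd i v y := funext (hpdW i)
    have h1 : HasFDerivAt (fun y => v y ^ ((-q) - 1 : ℝ))
        ((((-q) - 1) * v x ^ ((-q) - 1 - 1 : ℝ)) • fderiv ℝ v x) x :=
      ((hdv x).hasFDerivAt).rpow_const (Or.inl (hvpos x).ne')
    have h1' : HasFDerivAt (fun y => (-q) * v y ^ ((-q) - 1 : ℝ))
        ((-q) • ((((-q) - 1) * v x ^ ((-q) - 1 - 1 : ℝ)) • fderiv ℝ v x)) x :=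
      h1.const_mul (-q)
    have h2 : HasFDerivAt (pd i v) (fderiv ℝ (pd i v) x) x :=
      ((hpd_cd i).differentiable (by simp) x).hasFDerivAt
    have h3 : HasFDerivAt (fun y => (-q) * v y ^ ((-q) - 1 : ℝ) * pd i v y) _ x := h1'.mul h2
    rw [hfun]
    show fderiv ℝ _ x (Pi.single i 1) = _
    rw [h3.fderiv]
    simp only [ContinuousLinearMap.add_apply, ContinuousLinearMap.smul_apply, smul_eq_mul, pd]
  -- time derivative of W
  have ht_cd : ContDiff ℝ (⊤ : ℕ∞) (fun τ => u τ x) := by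
    have : (fun τ => u τ x) = (fun p : ℝ × (Fin n → ℝ) => u p.1 p.2) ∘ (fun τ => (τ, x)) := rfl
    rw [this]
    exact hu.comp (contDiff_id.prodMk contDiff_const)
  have hdt : HasDerivAt (fun τ => u τ x) (deriv (fun τ => u τ x) t) t :=
    ((ht_cd.differentiable (by simp) t).hasDerivAt)
  have hWt : deriv (fun τ => u τ x ^ (-q : ℝ)) t =
      deriv (fun τ => u τ x) t * (-q) * u t x ^ ((-q) - 1 : ℝ) :=
    (hdt.rpow_const (Or.inl (hpos t x ht).ne')).deriv
  -- abbreviations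
  set P : ℝ := u t x with hP
  have hPpos : 0 < P := hpos t x ht
  have hPne : P ≠ 0 := hPpos.ne'
  have hWpos : (0:ℝ) < P ^ (-q : ℝ) := Real.rpow_pos_of_pos hPpos _
  -- rpow identities
  have e1 : P ^ ((-q) - 1 : ℝ) = P ^ (-q : ℝ) * P⁻¹ := by
    rw [show ((-q) - 1 : ℝ) = (-q) + (-1) by ring, Real.rpow_add hPpos, Real.rpow_neg_one]
  have e2 : P ^ ((-q) - 1 - 1 : ℝ) = P ^ (-q : ℝ) * P⁻¹ * P⁻¹ := by
    rw [show ((-q) - 1 - 1 : ℝ) = (-q) + (-1) + (-1) by ring, Real.rpow_add hPpos,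
      Real.rpow_add hPpos, Real.rpow_neg_one]
  have hqne : q ≠ 0 := hq.ne'
  have e3 : (P ^ (-q : ℝ)) ^ ((q - 1) / q : ℝ) = P * P ^ (-q : ℝ) := by
    rw [← Real.rpow_mul hPpos.le]
    rw [show ((-q) * ((q - 1) / q) : ℝ) = 1 + (-q) by field_simp; ring]
    rw [Real.rpow_add hPpos, Real.rpow_one]
  -- laplacian of W
  have hlapW : lap (fun z => v z ^ (-q : ℝ)) x =
      (-q) * P ^ ((-q) - 1 : ℝ) * lap v x +
      (-q) * (((-q) - 1) * P ^ ((-q) - 1 - 1 : ℝ)) * (∑ i, (pd i v x) ^ 2) := by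
    simp only [lap]
    rw [Finset.mul_sum, Finset.mul_sum, ← Finset.sum_add_distrib]
    refine Finset.sum_congr rfl fun i _ => ?_
    rw [hW2 i]
    ring
  -- PDE
  have hpde' : deriv (fun τ => u τ x) t = lap v x + c * P * (1 - P) := hpde t x ht
  -- sum of squares of pd i W
  have hsum : (∑ i, (pd i (fun z => v z ^ (-q : ℝ)) x) ^ 2) =
      q ^ 2 * (P ^ ((-q) - 1 : ℝ)) ^ 2 * (∑ i, (pd i v x) ^ 2) := by
    rw [Finset.mul_sum]
    refine Finset.sum_congr rfl fun i _ => ?_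
    rw [hpdW i x]
    ring
  -- put everything together
  show lap (fun z => v z ^ (-q : ℝ)) x - deriv (fun τ => u τ x ^ (-q : ℝ)) t = _
  rw [hlapW, hWt, hpde', hsum, e1, e2, e3]
  have hWne : P ^ (-q : ℝ) ≠ 0 := hWpos.ne'
  rw [show v x = P from rfl]
  field_simp
  ring
end

section
/- Let n ≥ 1, c > 0, q > 0, and let u : ℝⁿ × [0,∞) → ℝ be a smooth positive solution of ∂ₜu = Δu + c·u(1−u). Set W := u^{−q} and H₁ := (∂ₜW)/W. Then (Δ − ∂ₜ)H₁ = (2/q)·⟨∇H₁, ∇ log W⟩ + c·W^{−1/q−1}·(∂ₜW). -/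
open Real Filter

section helpers
variable {E : Type*} [NormedAddCommGroup E] [NormedSpace ℝ E]

/-- Directional derivative. -/
noncomputable def Dd (w : E) (f : E → ℝ) : E → ℝ := fun p => fderiv ℝ f p w

theorem Dd_smooth {f : E → ℝ} (hf : ContDiff ℝ (⊤ : ℕ∞) f) (w : E) : ContDiff ℝ (⊤ : ℕ∞) (Dd w f) := by
  have h := hf.fderiv_right (m := (⊤ : ℕ∞)) (by simp)
  exact (ContinuousLinearMap.apply ℝ ℝ w).contDiff.comp h

theorem diffAt_div {f g : E → ℝ} {p : E} (hf : DifferentiableAt ℝ f p)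
    (hg : DifferentiableAt ℝ g p) (h : g p ≠ 0) :
    DifferentiableAt ℝ (fun p => f p / g p) p := by
  have h2 : DifferentiableAt ℝ (fun p => f p * (g p)⁻¹) p := hf.mul (hg.inv h)
  simpa only [div_eq_mul_inv] using h2

theorem Dd_congr {f g : E → ℝ} {p : E} (h : f =ᶠ[nhds p] g) (w : E) :
    Dd w f p = Dd w g p := by
  simp only [Dd, h.fderiv_eq]

theorem Dd_add {f g : E → ℝ} {p : E} (hf : DifferentiableAt ℝ f p)
    (hg : DifferentiableAt ℝ g p) (w : E) :
    Dd w (fun p => f p + g p) p = Dd w f p + Dd w g p := by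
  simp only [Dd, fderiv_fun_add hf hg, ContinuousLinearMap.add_apply]

theorem Dd_sub {f g : E → ℝ} {p : E} (hf : DifferentiableAt ℝ f p)
    (hg : DifferentiableAt ℝ g p) (w : E) :
    Dd w (fun p => f p - g p) p = Dd w f p - Dd w g p := by
  simp only [Dd, fderiv_fun_sub hf hg, ContinuousLinearMap.sub_apply]

theorem Dd_mul {f g : E → ℝ} {p : E} (hf : DifferentiableAt ℝ f p)
    (hg : DifferentiableAt ℝ g p) (w : E) :
    Dd w (fun p => f p * g p) p = Dd w f p * g p + f p * Dd w g p := by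
  simp only [Dd, fderiv_fun_mul hf hg, ContinuousLinearMap.add_apply,
    ContinuousLinearMap.smul_apply, smul_eq_mul]
  ring

theorem Dd_const_mul {f : E → ℝ} {p : E} (hf : DifferentiableAt ℝ f p) (a : ℝ) (w : E) :
    Dd w (fun p => a * f p) p = a * Dd w f p := by
  simp only [Dd, fderiv_const_mul hf a, ContinuousLinearMap.smul_apply, smul_eq_mul]

theorem Dd_sq {f : E → ℝ} {p : E} (hf : DifferentiableAt ℝ f p) (w : E) :
    Dd w (fun p => f p ^ 2) p = 2 * f p * Dd w f p := by
  have : (fun p => f p ^ 2) = fun p => f p * f p := by funext p; ring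
  rw [this, Dd_mul hf hf]; ring

theorem Dd_div {f g : E → ℝ} {p : E} (hf : DifferentiableAt ℝ f p)
    (hg : DifferentiableAt ℝ g p) (hgp : g p ≠ 0) (w : E) :
    Dd w (fun p => f p / g p) p =
      (Dd w f p * g p - f p * Dd w g p) / g p ^ 2 := by
  have hinv : HasFDerivAt (fun p => (g p)⁻¹) ((-(g p ^ 2)⁻¹) • fderiv ℝ g p) p :=
    (hasDerivAt_inv hgp).comp_hasFDerivAt p hg.hasFDerivAt
  have hmul : HasFDerivAt (fun p => f p * (g p)⁻¹) _ p := hf.hasFDerivAt.mul hinv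
  have hdiv : (fun p => f p / g p) = fun p => f p * (g p)⁻¹ := by
    funext p; rw [div_eq_mul_inv]
  rw [hdiv, Dd]
  rw [hmul.fderiv]
  simp only [ContinuousLinearMap.add_apply, ContinuousLinearMap.smul_apply, smul_eq_mul]
  field_simp [Dd]
  unfold Dd
  ring

theorem Dd_log {f : E → ℝ} {p : E} (hf : DifferentiableAt ℝ f p) (hfp : f p ≠ 0) (w : E) :
    Dd w (fun p => Real.log (f p)) p = Dd w f p / f p := by
  rw [Dd, (hf.hasFDerivAt.log hfp).fderiv]
  simp only [ContinuousLinearMap.smul_apply, smul_eq_mul, Dd]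
  field_simp

theorem Dd_rpow {f : E → ℝ} {p : E} (hf : DifferentiableAt ℝ f p) (hfp : f p ≠ 0)
    (r : ℝ) (w : E) :
    Dd w (fun p => f p ^ r) p = r * f p ^ (r - 1) * Dd w f p := by
  have h := (Real.hasDerivAt_rpow_const (x := f p) (p := r) (Or.inl hfp)).comp_hasFDerivAt
    p hf.hasFDerivAt
  rw [Dd, show (fun p => f p ^ r) = (fun x => x ^ r) ∘ f from rfl, h.fderiv]
  simp only [ContinuousLinearMap.smul_apply, smul_eq_mul, Dd]

theorem Dd_comm {f : E → ℝ} (hf : ContDiff ℝ (⊤ : ℕ∞) f) (v w : E) (p : E) :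
    Dd v (Dd w f) p = Dd w (Dd v f) p := by
  have hd : DifferentiableAt ℝ (fderiv ℝ f) p :=
    ((hf.fderiv_right (m := (⊤ : ℕ∞)) (by simp)).differentiable (by simp)).differentiableAt
  have key : ∀ a b : E, Dd a (Dd b f) p = fderiv ℝ (fderiv ℝ f) p a b := by
    intro a b
    have h := (ContinuousLinearMap.apply ℝ ℝ b).hasFDerivAt.comp p hd.hasFDerivAt
    rw [Dd, show Dd b f = (⇑(ContinuousLinearMap.apply ℝ ℝ b)) ∘ fderiv ℝ f from rfl,
      h.fderiv]
    rfl
  rw [key, key]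
  exact second_derivative_symmetric
    (fun y => (hf.differentiable (by simp) y).hasFDerivAt) hd.hasFDerivAt v w
end helpers

section slices
variable {F : Type*} [NormedAddCommGroup F] [NormedSpace ℝ F]
variable {F : Type*} [NormedAddCommGroup F] [NormedSpace ℝ F]


theorem hasDerivAt_slice (f : ℝ × F → ℝ) (t : ℝ) (x : F)
    (hf : DifferentiableAt ℝ f (t, x)) :
    HasDerivAt (fun τ => f (τ, x)) (Dd ((1:ℝ), (0:F)) f (t, x)) t := by
  have hι : HasDerivAt (fun τ : ℝ => (τ, x)) ((1:ℝ), (0:F)) t :=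
    (hasDerivAt_id t).prodMk (hasDerivAt_const t x)
  exact hf.hasFDerivAt.comp_hasDerivAt t hι

theorem pd_slice' (f : ℝ × F → ℝ) (t : ℝ) (x : F) (w : F)
    (hf : DifferentiableAt ℝ f (t, x)) :
    fderiv ℝ (fun y => f (t, y)) x w = Dd ((0:ℝ), w) f (t, x) := by
  have hι : HasFDerivAt (fun y : F => (t, y))
      ((0 : F →L[ℝ] ℝ).prod (ContinuousLinearMap.id ℝ F)) x :=
    (hasFDerivAt_const t x).prodMk (hasFDerivAt_id x)
  have h := hf.hasFDerivAt.comp x hι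
  rw [show (fun y => f (t, y)) = f ∘ (fun y : F => (t, y)) from rfl, h.fderiv]
  rfl

theorem deriv_eq_deriv_of_Ici {f g : ℝ → ℝ} {t : ℝ} (hf : DifferentiableAt ℝ f t)
    (hg : DifferentiableAt ℝ g t) (h : ∀ τ, t ≤ τ → f τ = g τ) :
    deriv f t = deriv g t := by
  have h1 : HasDerivWithinAt f (deriv f t) (Set.Ici t) t :=
    hf.hasDerivAt.hasDerivWithinAt
  have h2 : HasDerivWithinAt f (deriv g t) (Set.Ici t) t :=
    (hg.hasDerivAt.hasDerivWithinAt).congr (fun y hy => h y hy) (h t le_rfl)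
  have := (uniqueDiffOn_Ici t t Set.self_mem_Ici).eq h1.hasFDerivWithinAt h2.hasFDerivWithinAt
  have := congrArg (fun L : ℝ →L[ℝ] ℝ => L 1) this
  simpa using this
end slices



/-- `W = u^{-q}`. -/
noncomputable def Wfun {n : ℕ} (q : ℝ) (u : ℝ → (Fin n → ℝ) → ℝ) :
    ℝ → (Fin n → ℝ) → ℝ :=
  fun t x => u t x ^ (-q : ℝ)

/-- `H₁ = (∂ₜW)/W`. -/
noncomputable def H1fun {n : ℕ} (q : ℝ) (u : ℝ → (Fin n → ℝ) → ℝ) :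
    ℝ → (Fin n → ℝ) → ℝ :=
  fun t x => deriv (fun τ => Wfun q u τ x) t / Wfun q u t x

section fkpp
variable {n : ℕ}

/-- joint function -/
noncomputable def Uf (u : ℝ → (Fin n → ℝ) → ℝ) : ℝ × (Fin n → ℝ) → ℝ :=
  fun p => u p.1 p.2

/-- time derivative of `u` as joint function -/
noncomputable def Vf (u : ℝ → (Fin n → ℝ) → ℝ) : ℝ × (Fin n → ℝ) → ℝ :=
  Dd ((1:ℝ), (0 : Fin n → ℝ)) (Uf u)

/-- spatial direction -/
noncomputable def eI (i : Fin n) : ℝ × (Fin n → ℝ) := ((0:ℝ), Pi.single i 1)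

noncomputable def Qf (q : ℝ) (u : ℝ → (Fin n → ℝ) → ℝ) : ℝ × (Fin n → ℝ) → ℝ :=
  fun p => -q * (Vf u p / Uf u p)

noncomputable def Eif (q : ℝ) (u : ℝ → (Fin n → ℝ) → ℝ) (i : Fin n) :
    ℝ × (Fin n → ℝ) → ℝ :=
  fun p => -q * ((Dd (eI i) (Vf u) p * Uf u p - Vf u p * Dd (eI i) (Uf u) p) / Uf u p ^ 2)

variable {u : ℝ → (Fin n → ℝ) → ℝ} {q c : ℝ}

theorem hUof (hu : ContDiff ℝ (⊤ : ℕ∞) (fun p : ℝ × (Fin n → ℝ) => u p.1 p.2)) :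
    ContDiff ℝ (⊤ : ℕ∞) (Uf u) := hu

theorem derivT (hu : ContDiff ℝ (⊤ : ℕ∞) (fun p : ℝ × (Fin n → ℝ) => u p.1 p.2)) (t : ℝ)
    (x : Fin n → ℝ) : deriv (fun τ => u τ x) t = Vf u (t, x) :=
  (hasDerivAt_slice (Uf u) t x (((hUof hu).differentiable (by simp)) (t, x))).deriv

theorem pdT (f : ℝ × (Fin n → ℝ) → ℝ) {t : ℝ} {x : Fin n → ℝ}
    (hf : DifferentiableAt ℝ f (t, x)) (i : Fin n) :
    pd i (fun y => f (t, y)) x = Dd (eI i) f (t, x) :=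
  pd_slice' f t x (Pi.single i 1) hf

theorem lapT (f : ℝ × (Fin n → ℝ) → ℝ) (hf : ContDiff ℝ (⊤ : ℕ∞) f) (t : ℝ) (x : Fin n → ℝ) :
    lap (fun y => f (t, y)) x = ∑ i, Dd (eI i) (Dd (eI i) f) (t, x) := by
  show ∑ i, pd i (pd i fun y => f (t, y)) x = _
  refine Finset.sum_congr rfl fun i _ => ?_
  have h1 : pd i (fun y => f (t, y)) = fun y => Dd (eI i) f (t, y) :=
    funext fun y => pdT f ((hf.differentiable (by simp)) (t, y)) i
  rw [h1]
  exact pdT (Dd (eI i) f) (((Dd_smooth hf _).differentiable (by simp)) (t, x)) i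

theorem pdeJ (hu : ContDiff ℝ (⊤ : ℕ∞) (fun p : ℝ × (Fin n → ℝ) => u p.1 p.2))
    (hpde : ∀ t x, 0 ≤ t →
      deriv (fun τ => u τ x) t = lap (u t) x + c * u t x * (1 - u t x)) :
    ∀ p : ℝ × (Fin n → ℝ), 0 ≤ p.1 →
      Vf u p = (∑ i, Dd (eI i) (Dd (eI i) (Uf u)) p) + c * Uf u p * (1 - Uf u p) := by
  rintro ⟨τ, y⟩ hτ
  have h := hpde τ y hτ
  rw [derivT hu τ y] at h
  have h2 : lap (u τ) y = ∑ i, Dd (eI i) (Dd (eI i) (Uf u)) (τ, y) :=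
    lapT (Uf u) (hUof hu) τ y
  rw [h2] at h
  exact h

theorem Wderiv (hu : ContDiff ℝ (⊤ : ℕ∞) (fun p : ℝ × (Fin n → ℝ) => u p.1 p.2))
    (τ : ℝ) (y : Fin n → ℝ) (h : 0 < u τ y) :
    deriv (fun σ => Wfun q u σ y) τ = -q * u τ y ^ (-q - 1) * Vf u (τ, y) := by
  have h1 : HasDerivAt (fun σ => u σ y) (Vf u (τ, y)) τ :=
    hasDerivAt_slice (Uf u) τ y (((hUof hu).differentiable (by simp)) (τ, y))
  have h2 := (Real.hasDerivAt_rpow_const (x := u τ y) (p := -q) (Or.inl h.ne')).comp τ h1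
  exact h2.deriv

theorem H1form (hu : ContDiff ℝ (⊤ : ℕ∞) (fun p : ℝ × (Fin n → ℝ) => u p.1 p.2))
    (τ : ℝ) (y : Fin n → ℝ) (h : 0 < u τ y) :
    H1fun q u τ y = -q * (Vf u (τ, y) / Uf u (τ, y)) := by
  have hW := Wderiv (q := q) hu τ y h
  show deriv (fun σ => Wfun q u σ y) τ / Wfun q u τ y = _
  rw [hW]
  show -q * u τ y ^ (-q - 1) * Vf u (τ, y) / u τ y ^ (-q) = -q * (Vf u (τ, y) / u τ y)
  rw [show (-q - 1 : ℝ) = -q + -1 by ring, Real.rpow_add h, Real.rpow_neg_one]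
  have h0 : u τ y ^ (-q) ≠ 0 := (Real.rpow_pos_of_pos h _).ne'
  field_simp

theorem DdQ (hu : ContDiff ℝ (⊤ : ℕ∞) (fun p : ℝ × (Fin n → ℝ) => u p.1 p.2))
    (w : ℝ × (Fin n → ℝ)) (p : ℝ × (Fin n → ℝ)) (hp : Uf u p ≠ 0) :
    Dd w (Qf q u) p =
      -q * ((Dd w (Vf u) p * Uf u p - Vf u p * Dd w (Uf u) p) / Uf u p ^ 2) := by
  have hV : DifferentiableAt ℝ (Vf u) p :=
    ((Dd_smooth (hUof hu) _).differentiable (by simp)) p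
  have hUd : DifferentiableAt ℝ (Uf u) p := ((hUof hu).differentiable (by simp)) p
  have hdiv : DifferentiableAt ℝ (fun p => Vf u p / Uf u p) p := diffAt_div hV hUd hp
  unfold Qf
  rw [Dd_const_mul hdiv (-q) w, Dd_div hV hUd hp]

theorem H1eq (hu : ContDiff ℝ (⊤ : ℕ∞) (fun p : ℝ × (Fin n → ℝ) => u p.1 p.2))
    (t : ℝ) (hposT : ∀ y, 0 < u t y) :
    H1fun q u t = fun y => Qf q u (t, y) :=
  funext fun y => H1form hu t y (hposT y)

theorem pdH1 (hu : ContDiff ℝ (⊤ : ℕ∞) (fun p : ℝ × (Fin n → ℝ) => u p.1 p.2))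
    (t : ℝ) (hposT : ∀ y, 0 < u t y) (x : Fin n → ℝ) (i : Fin n) :
    pd i (H1fun q u t) x = Eif q u i (t, x) := by
  rw [H1eq hu t hposT]
  have hV : DifferentiableAt ℝ (Vf u) (t, x) :=
    ((Dd_smooth (hUof hu) _).differentiable (by simp)) (t, x)
  have hUd : DifferentiableAt ℝ (Uf u) (t, x) := ((hUof hu).differentiable (by simp)) (t, x)
  have hne : Uf u (t, x) ≠ 0 := (hposT x).ne'
  have hdiv : DifferentiableAt ℝ (fun p => Vf u p / Uf u p) (t, x) := diffAt_div hV hUd hne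
  have hQd0 : DifferentiableAt ℝ (fun p => -q * (Vf u p / Uf u p)) (t, x) :=
    hdiv.const_mul (-q)
  have hQd : DifferentiableAt ℝ (Qf q u) (t, x) := hQd0
  rw [pdT (Qf q u) hQd i]
  exact DdQ hu (eI i) (t, x) (hposT x).ne'

theorem lapH1 (hu : ContDiff ℝ (⊤ : ℕ∞) (fun p : ℝ × (Fin n → ℝ) => u p.1 p.2))
    (t : ℝ) (hposT : ∀ y, 0 < u t y) (x : Fin n → ℝ) :
    lap (H1fun q u t) x = ∑ i, Dd (eI i) (Eif q u i) (t, x) := by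
  show ∑ i, pd i (pd i (H1fun q u t)) x = _
  refine Finset.sum_congr rfl fun i _ => ?_
  have h1 : pd i (H1fun q u t) = fun y => Eif q u i (t, y) :=
    funext fun y => pdH1 hu t hposT y i
  rw [h1]
  have hUs := hUof hu
  have hVs : ContDiff ℝ (⊤ : ℕ∞) (Vf u) := Dd_smooth hUs _
  have hUd : DifferentiableAt ℝ (Uf u) (t, x) := (hUs.differentiable (by simp)) (t, x)
  have hne : Uf u (t, x) ≠ 0 := (hposT x).ne'
  have dnum : DifferentiableAt ℝ
      (fun p => Dd (eI i) (Vf u) p * Uf u p - Vf u p * Dd (eI i) (Uf u) p) (t, x) :=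
    (((Dd_smooth hVs _).differentiable (by simp) (t, x)).mul hUd).sub
      ((hVs.differentiable (by simp) (t, x)).mul ((Dd_smooth hUs _).differentiable (by simp) (t, x)))
  have dden : DifferentiableAt ℝ (fun p => Uf u p ^ 2) (t, x) := hUd.pow 2
  have hE0 : DifferentiableAt ℝ
      (fun p => -q * ((Dd (eI i) (Vf u) p * Uf u p - Vf u p * Dd (eI i) (Uf u) p)
        / Uf u p ^ 2)) (t, x) :=
    (diffAt_div dnum dden (pow_ne_zero 2 hne)).const_mul (-q)
  have hE : DifferentiableAt ℝ (Eif q u i) (t, x) := hE0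
  exact pdT (Eif q u i) hE i

theorem DdE (hu : ContDiff ℝ (⊤ : ℕ∞) (fun p : ℝ × (Fin n → ℝ) => u p.1 p.2))
    (i : Fin n) (p : ℝ × (Fin n → ℝ)) (hp : Uf u p ≠ 0) :
    Dd (eI i) (Eif q u i) p =
      -q * ((((Dd (eI i) (Dd (eI i) (Vf u)) p * Uf u p
          + Dd (eI i) (Vf u) p * Dd (eI i) (Uf u) p)
          - (Dd (eI i) (Vf u) p * Dd (eI i) (Uf u) p
          + Vf u p * Dd (eI i) (Dd (eI i) (Uf u)) p)) * Uf u p ^ 2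
        - (Dd (eI i) (Vf u) p * Uf u p - Vf u p * Dd (eI i) (Uf u) p)
          * (2 * Uf u p * Dd (eI i) (Uf u) p)) / (Uf u p ^ 2) ^ 2) := by
  have hUs := hUof hu
  have hVs : ContDiff ℝ (⊤ : ℕ∞) (Vf u) := Dd_smooth hUs _
  have dU : DifferentiableAt ℝ (Uf u) p := (hUs.differentiable (by simp)) p
  have dV : DifferentiableAt ℝ (Vf u) p := (hVs.differentiable (by simp)) p
  have dUi : DifferentiableAt ℝ (Dd (eI i) (Uf u)) p :=
    ((Dd_smooth hUs _).differentiable (by simp)) p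
  have dVi : DifferentiableAt ℝ (Dd (eI i) (Vf u)) p :=
    ((Dd_smooth hVs _).differentiable (by simp)) p
  have dnum : DifferentiableAt ℝ
      (fun p => Dd (eI i) (Vf u) p * Uf u p - Vf u p * Dd (eI i) (Uf u) p) p :=
    (dVi.mul dU).sub (dV.mul dUi)
  have dden : DifferentiableAt ℝ (fun p => Uf u p ^ 2) p := dU.pow 2
  have hdiv : DifferentiableAt ℝ (fun p => (Dd (eI i) (Vf u) p * Uf u p
      - Vf u p * Dd (eI i) (Uf u) p) / Uf u p ^ 2) p :=
    diffAt_div dnum dden (pow_ne_zero 2 hp)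
  unfold Eif
  rw [Dd_const_mul hdiv (-q) (eI i), Dd_div dnum dden (pow_ne_zero 2 hp),
    Dd_sub (f := fun p => Dd (eI i) (Vf u) p * Uf u p) (g := fun p => Vf u p * Dd (eI i) (Uf u) p)
      (dVi.mul dU) (dV.mul dUi), Dd_mul dVi dU, Dd_mul dV dUi, Dd_sq dU]

theorem pdlogW (hu : ContDiff ℝ (⊤ : ℕ∞) (fun p : ℝ × (Fin n → ℝ) => u p.1 p.2))
    (t : ℝ) (hposT : ∀ y, 0 < u t y) (x : Fin n → ℝ) (i : Fin n) :
    pd i (fun y => Real.log (Wfun q u t y)) x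
      = -q * (Dd (eI i) (Uf u) (t, x) / Uf u (t, x)) := by
  have h1 : (fun y => Real.log (Wfun q u t y)) = fun y => -q * Real.log (Uf u (t, y)) := by
    funext y
    show Real.log (u t y ^ (-q : ℝ)) = -q * Real.log (u t y)
    rw [Real.log_rpow (hposT y)]
  have hUd : DifferentiableAt ℝ (Uf u) (t, x) := (hUof hu).differentiable (by simp) (t, x)
  have hld : DifferentiableAt ℝ (fun p => Real.log (Uf u p)) (t, x) :=
    hUd.log (hposT x).ne'
  have hd : DifferentiableAt ℝ (fun p => -q * Real.log (Uf u p)) (t, x) := hld.const_mul (-q)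
  calc pd i (fun y => Real.log (Wfun q u t y)) x
      = pd i (fun y => -q * Real.log (Uf u (t, y))) x := by rw [h1]
    _ = Dd (eI i) (fun p => -q * Real.log (Uf u p)) (t, x) := pdT _ hd i
    _ = -q * Dd (eI i) (fun p => Real.log (Uf u p)) (t, x) := Dd_const_mul hld (-q) (eI i)
    _ = -q * (Dd (eI i) (Uf u) (t, x) / Uf u (t, x)) := by
        rw [Dd_log hUd (hposT x).ne' (eI i)]

end fkpp

/-- Euclidean specialization of equation (3.22):
`(Δ − ∂ₜ)H₁ = (2/q)·⟨∇H₁, ∇ log W⟩ + c·W^{−1/q−1}·(∂ₜW)`. -/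
theorem fisher_kpp_H1_equation (n : ℕ) (hn : 1 ≤ n) (c q : ℝ) (hc : 0 < c) (hq : 0 < q)
    (u : ℝ → (Fin n → ℝ) → ℝ)
    (hu : ContDiff ℝ (⊤ : ℕ∞) (fun p : ℝ × (Fin n → ℝ) => u p.1 p.2))
    (hpos : ∀ t x, 0 ≤ t → 0 < u t x)
    (hpde : ∀ t x, 0 ≤ t →
      deriv (fun τ => u τ x) t = lap (u t) x + c * u t x * (1 - u t x)) :
    ∀ t x, 0 ≤ t →
      lap (H1fun q u t) x - deriv (fun τ => H1fun q u τ x) t =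
        (2 / q) * (∑ i, pd i (H1fun q u t) x
            * pd i (fun y => Real.log (Wfun q u t y)) x)
          + c * (Wfun q u t x ^ (-1 / q - 1 : ℝ)) * deriv (fun τ => Wfun q u τ x) t := by
  intro t x ht
  have hUs : ContDiff ℝ (⊤ : ℕ∞) (Uf u) := hu
  have hVs : ContDiff ℝ (⊤ : ℕ∞) (Vf u) := Dd_smooth hUs _
  have hposT : ∀ y, 0 < u t y := fun y => hpos t y ht
  have hA : (0:ℝ) < Uf u (t, x) := hposT x
  have hA' : Uf u (t, x) ≠ 0 := hA.ne'
  have hq' : q ≠ 0 := hq.ne'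
  have hVd : DifferentiableAt ℝ (Vf u) (t, x) := (hVs.differentiable (by simp)) (t, x)
  have hUd : DifferentiableAt ℝ (Uf u) (t, x) := (hUs.differentiable (by simp)) (t, x)
  -- time derivative of H1
  have hcont : Continuous fun τ : ℝ => Uf u (τ, x) :=
    hUs.continuous.comp (continuous_id.prodMk continuous_const)
  have hev : ∀ᶠ τ in nhds t, 0 < Uf u (τ, x) :=
    hcont.continuousAt.preimage_mem_nhds (Ioi_mem_nhds hA)
  have heq : (fun τ => H1fun q u τ x) =ᶠ[nhds t] fun τ => Qf q u (τ, x) := by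
    filter_upwards [hev] with τ hτ
    exact H1form hu τ x hτ
  have hQd0 : DifferentiableAt ℝ (fun p => -q * (Vf u p / Uf u p)) (t, x) :=
    (diffAt_div hVd hUd hA').const_mul (-q)
  have hQd : DifferentiableAt ℝ (Qf q u) (t, x) := hQd0
  have hH1t : deriv (fun τ => H1fun q u τ x) t
      = -q * ((Dd ((1:ℝ), (0:Fin n → ℝ)) (Vf u) (t, x) * Uf u (t, x)
          - Vf u (t, x) * Vf u (t, x)) / Uf u (t, x) ^ 2) := by
    rw [heq.deriv_eq, (hasDerivAt_slice (Qf q u) t x hQd).deriv,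
      DdQ hu ((1:ℝ), (0:Fin n → ℝ)) (t, x) hA']
    rfl
  -- PDE at (t,x)
  have hP1 : Vf u (t, x) = (∑ i, Dd (eI i) (Dd (eI i) (Uf u)) (t, x))
      + c * Uf u (t, x) * (1 - Uf u (t, x)) := pdeJ hu hpde (t, x) ht
  -- time derivative of the PDE
  have hslU : HasDerivAt (fun τ => Uf u (τ, x))
      (Dd ((1:ℝ), (0:Fin n → ℝ)) (Uf u) (t, x)) t := hasDerivAt_slice (Uf u) t x hUd
  have hG : HasDerivAt (fun τ => (∑ i, Dd (eI i) (Dd (eI i) (Uf u)) (τ, x))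
        + c * Uf u (τ, x) * (1 - Uf u (τ, x)))
      ((∑ i, Dd ((1:ℝ), (0:Fin n → ℝ)) (Dd (eI i) (Dd (eI i) (Uf u))) (t, x))
        + (c * Dd ((1:ℝ), (0:Fin n → ℝ)) (Uf u) (t, x) * (1 - Uf u (t, x))
          + c * Uf u (t, x) * (0 - Dd ((1:ℝ), (0:Fin n → ℝ)) (Uf u) (t, x)))) t := by
    refine HasDerivAt.add (HasDerivAt.fun_sum fun i _ => hasDerivAt_slice _ t x
      (((Dd_smooth (Dd_smooth hUs _) _).differentiable (by simp)) (t, x))) ?_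
    exact (hslU.const_mul c).mul ((hasDerivAt_const t (1:ℝ)).sub hslU)
  have hFd : DifferentiableAt ℝ (fun τ => Vf u (τ, x)) t :=
    (hasDerivAt_slice (Vf u) t x hVd).differentiableAt
  have heqd := deriv_eq_deriv_of_Ici hFd hG.differentiableAt
      (fun τ hτ => pdeJ hu hpde (τ, x) (le_trans ht hτ))
  rw [(hasDerivAt_slice (Vf u) t x hVd).deriv, hG.deriv] at heqd
  have hDB : Dd ((1:ℝ), (0:Fin n → ℝ)) (Uf u) (t, x) = Vf u (t, x) := rfl
  rw [hDB] at heqd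
  have hcomm : ∀ i : Fin n,
      Dd ((1:ℝ), (0:Fin n → ℝ)) (Dd (eI i) (Dd (eI i) (Uf u))) (t, x)
        = Dd (eI i) (Dd (eI i) (Vf u)) (t, x) := by
    intro i
    rw [Dd_comm (Dd_smooth hUs (eI i)) ((1:ℝ), (0:Fin n → ℝ)) (eI i) (t, x)]
    rw [show Dd ((1:ℝ), (0:Fin n → ℝ)) (Dd (eI i) (Uf u)) = Dd (eI i) (Vf u) from
      funext fun p => Dd_comm hUs ((1:ℝ), (0:Fin n → ℝ)) (eI i) p]
  rw [Finset.sum_congr rfl fun i _ => hcomm i] at heqd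
  -- the c-term
  have hWd : deriv (fun τ => Wfun q u τ x) t = -q * u t x ^ (-q - 1) * Vf u (t, x) :=
    Wderiv hu t x (hposT x)
  have hct : c * Wfun q u t x ^ (-1 / q - 1 : ℝ) * deriv (fun τ => Wfun q u τ x) t
      = -(c * q * Vf u (t, x)) := by
    rw [hWd]
    show c * (u t x ^ (-q : ℝ)) ^ (-1 / q - 1 : ℝ)
        * (-q * u t x ^ (-q - 1 : ℝ) * Vf u (t, x)) = _
    rw [← Real.rpow_mul (hposT x).le]
    have he : (-q * (-1 / q - 1) : ℝ) = q + 1 := by field_simp; ring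
    rw [he]
    have h2 : u t x ^ (q + 1 : ℝ) * u t x ^ (-q - 1 : ℝ) = 1 := by
      rw [← Real.rpow_add (hposT x), show (q + 1 + (-q - 1) : ℝ) = 0 by ring,
        Real.rpow_zero]
    calc c * u t x ^ (q + 1 : ℝ) * (-q * u t x ^ (-q - 1 : ℝ) * Vf u (t, x))
        = -(c * q * Vf u (t, x)) * (u t x ^ (q + 1 : ℝ) * u t x ^ (-q - 1 : ℝ)) := by ring
      _ = -(c * q * Vf u (t, x)) := by rw [h2, mul_one]
  -- sums
  have hsum1 : ∀ i : Fin n, Dd (eI i) (Eif q u i) (t, x)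
      = (-q / Uf u (t, x)) * Dd (eI i) (Dd (eI i) (Vf u)) (t, x)
        + (q * Vf u (t, x) / Uf u (t, x) ^ 2) * Dd (eI i) (Dd (eI i) (Uf u)) (t, x)
        + (2 * q / Uf u (t, x) ^ 2) * (Dd (eI i) (Vf u) (t, x) * Dd (eI i) (Uf u) (t, x))
        + (-(2 * q * Vf u (t, x)) / Uf u (t, x) ^ 3)
          * (Dd (eI i) (Uf u) (t, x) * Dd (eI i) (Uf u) (t, x)) := by
    intro i
    rw [DdE hu i (t, x) hA']
    field_simp
    ring
  have hsum2 : ∀ i : Fin n,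
      pd i (H1fun q u t) x * pd i (fun y => Real.log (Wfun q u t y)) x
      = (q ^ 2 / Uf u (t, x) ^ 2) * (Dd (eI i) (Vf u) (t, x) * Dd (eI i) (Uf u) (t, x))
        - (q ^ 2 * Vf u (t, x) / Uf u (t, x) ^ 3)
          * (Dd (eI i) (Uf u) (t, x) * Dd (eI i) (Uf u) (t, x)) := by
    intro i
    rw [pdH1 hu t hposT x i, pdlogW hu t hposT x i]
    simp only [Eif]
    field_simp
  -- assemble
  rw [lapH1 hu t hposT x, hH1t, hct,
    Finset.sum_congr rfl fun i (_ : i ∈ Finset.univ) => hsum1 i,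
    Finset.sum_congr rfl fun i (_ : i ∈ Finset.univ) => hsum2 i,
    Finset.sum_add_distrib, Finset.sum_add_distrib, Finset.sum_add_distrib,
    Finset.sum_sub_distrib, ← Finset.mul_sum, ← Finset.mul_sum, ← Finset.mul_sum,
    ← Finset.mul_sum, ← Finset.mul_sum, ← Finset.mul_sum]
  rw [heqd, hP1]
  field_simp
  ring
end

section
/- Let n ≥ 1, c > 0, s > 1, q > 0, ε ∈ (0,1), and let N > n be a real number; set D := N − ε(N−n), a := s·q², β := s·q. Let u : ℝⁿ × [0,∞) → ℝ be a smooth positive solution of ∂ₜu = Δu + c·u(1−u), set W := u^{−q} and H := |∇W|²/W² + a·c·(1 − W^{−1/q}) + β·(∂ₜW)/W. Then at every point (Δ − ∂ₜ)H ≥ [ (2(1−ε)/D)·((sq+s−1)²/(s²q²)) − 2(1/ε − 1) ]·|∇W|⁴/W⁴ + (2(1−ε)/D)·(1/(s²q²))·H² + (4(1−ε)/D)·((sq+s−1)/(s²q²))·H·|∇W|²/W² + (2/q)·⟨∇H, ∇ log W⟩ + (c − 2cs)·W^{−1/q}·|∇W|²/W² + c·W^{−1/q}·H. -/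
/-- `H = |∇W|²/W² + ac·(1 − W^{−1/q}) + β·(∂ₜW)/W`. -/
noncomputable def Hfun {n : ℕ} (a β c q : ℝ) (u : ℝ → (Fin n → ℝ) → ℝ) :
    ℝ → (Fin n → ℝ) → ℝ :=
  fun t x => (∑ i, (pd i (Wfun q u t) x) ^ 2) / (Wfun q u t x) ^ 2
    + a * c * (1 - Wfun q u t x ^ (-1 / q : ℝ))
    + β * (deriv (fun τ => Wfun q u τ x) t / Wfun q u t x)

open Real Filter Set Topology ContDiff



open Real Filter Set Topology ContDiff

variable {n : ℕ}

lemma hasFDerivAt_pd {f : (Fin n → ℝ) → ℝ} {L : (Fin n → ℝ) →L[ℝ] ℝ} {x}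
    (h : HasFDerivAt f L x) (i : Fin n) :
    pd i f x = L (Pi.single i 1) := by rw [pd, h.fderiv]

lemma pd_congr_nhds {f g : (Fin n → ℝ) → ℝ} {x} (h : f =ᶠ[𝓝 x] g) (i : Fin n) :
    pd i f x = pd i g x := by unfold pd; rw [h.fderiv_eq]

lemma pd_add {f g : (Fin n → ℝ) → ℝ} {x} (hf : DifferentiableAt ℝ f x)
    (hg : DifferentiableAt ℝ g x) (i : Fin n) :
    pd i (fun y => f y + g y) x = pd i f x + pd i g x := by
  rw [hasFDerivAt_pd (hf.hasFDerivAt.fun_add hg.hasFDerivAt)]; rfl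

lemma pd_sub {f g : (Fin n → ℝ) → ℝ} {x} (hf : DifferentiableAt ℝ f x)
    (hg : DifferentiableAt ℝ g x) (i : Fin n) :
    pd i (fun y => f y - g y) x = pd i f x - pd i g x := by
  rw [hasFDerivAt_pd (hf.hasFDerivAt.fun_sub hg.hasFDerivAt)]; rfl

lemma pd_const (a : ℝ) (x : Fin n → ℝ) (i : Fin n) : pd i (fun _ => a) x = 0 := by
  rw [hasFDerivAt_pd (hasFDerivAt_const a x)]; rfl

lemma pd_mul {f g : (Fin n → ℝ) → ℝ} {x} (hf : DifferentiableAt ℝ f x)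
    (hg : DifferentiableAt ℝ g x) (i : Fin n) :
    pd i (fun y => f y * g y) x = f x * pd i g x + g x * pd i f x := by
  rw [hasFDerivAt_pd (hf.hasFDerivAt.fun_mul hg.hasFDerivAt)]
  simp [pd]

lemma pd_const_mul {f : (Fin n → ℝ) → ℝ} {x} (hf : DifferentiableAt ℝ f x) (a : ℝ) (i : Fin n) :
    pd i (fun y => a * f y) x = a * pd i f x := by
  rw [hasFDerivAt_pd (hf.hasFDerivAt.const_mul a)]; simp [pd]

lemma pd_sum {ι : Type*} (s : Finset ι) {f : ι → (Fin n → ℝ) → ℝ} {x}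
    (hf : ∀ j ∈ s, DifferentiableAt ℝ (f j) x) (i : Fin n) :
    pd i (fun y => ∑ j ∈ s, f j y) x = ∑ j ∈ s, pd i (f j) x := by
  rw [hasFDerivAt_pd (HasFDerivAt.fun_sum (fun j hj => (hf j hj).hasFDerivAt))]
  simp [pd]

lemma pd_sq {f : (Fin n → ℝ) → ℝ} {x} (hf : DifferentiableAt ℝ f x) (i : Fin n) :
    pd i (fun y => f y ^ 2) x = 2 * f x * pd i f x := by
  have h : (fun y => f y ^ 2) = fun y => f y * f y := by funext y; ring
  rw [h, pd_mul hf hf]; ring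

lemma pd_exp {f : (Fin n → ℝ) → ℝ} {x} (hf : DifferentiableAt ℝ f x) (i : Fin n) :
    pd i (fun y => Real.exp (f y)) x = Real.exp (f x) * pd i f x := by
  have h : HasFDerivAt (fun y => Real.exp (f y)) (Real.exp (f x) • fderiv ℝ f x) x :=
    (Real.hasDerivAt_exp (f x)).comp_hasFDerivAt x hf.hasFDerivAt
  rw [hasFDerivAt_pd h]; simp [pd]

lemma pd_log {f : (Fin n → ℝ) → ℝ} {x} (hf : DifferentiableAt ℝ f x) (hx : f x ≠ 0) (i : Fin n) :
    pd i (fun y => Real.log (f y)) x = (f x)⁻¹ * pd i f x := by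
  have h : HasFDerivAt (fun y => Real.log (f y)) ((f x)⁻¹ • fderiv ℝ f x) x :=
    (Real.hasDerivAt_log hx).comp_hasFDerivAt x hf.hasFDerivAt
  rw [hasFDerivAt_pd h]; simp [pd]

lemma contDiff_pd {f : (Fin n → ℝ) → ℝ} (hf : ContDiff ℝ (∞ : WithTop ℕ∞) f) (i : Fin n) :
    ContDiff ℝ (∞ : WithTop ℕ∞) (pd i f) :=
  (hf.fderiv_right (by simp)).clm_apply contDiff_const

lemma contDiff_lap {f : (Fin n → ℝ) → ℝ} (hf : ContDiff ℝ (∞ : WithTop ℕ∞) f) :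
    ContDiff ℝ (∞ : WithTop ℕ∞) (fun x => lap f x) := by
  have h : (fun x => lap f x) = fun x => ∑ i, pd i (pd i f) x := rfl
  rw [h]
  exact ContDiff.sum fun i _ => contDiff_pd (contDiff_pd hf i) i

section SliceLemmas
variable {n : ℕ} {P : ℝ × (Fin n → ℝ) → ℝ} {t τ : ℝ} {x : Fin n → ℝ}


lemma hasFDerivAt_incl_space (τ : ℝ) (x : Fin n → ℝ) :
    HasFDerivAt (fun y : Fin n → ℝ => (τ, y))
      ((0 : (Fin n → ℝ) →L[ℝ] ℝ).prod (ContinuousLinearMap.id ℝ _)) x :=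
  (hasFDerivAt_const τ x).prodMk (hasFDerivAt_id x)

lemma hasFDerivAt_incl_time (t : ℝ) (x : Fin n → ℝ) :
    HasFDerivAt (fun σ : ℝ => (σ, x))
      ((ContinuousLinearMap.id ℝ ℝ).prod (0 : ℝ →L[ℝ] (Fin n → ℝ))) t :=
  (hasFDerivAt_id t).prodMk (hasFDerivAt_const x t)

lemma pd_slice (hP : DifferentiableAt ℝ P (τ, x)) (i : Fin n) :
    pd i (fun y => P (τ, y)) x = fderiv ℝ P (τ, x) (0, Pi.single i 1) := by
  have h : HasFDerivAt (fun y => P (τ, y))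
      ((fderiv ℝ P (τ, x)).comp ((0 : (Fin n → ℝ) →L[ℝ] ℝ).prod (ContinuousLinearMap.id ℝ _))) x :=
    hP.hasFDerivAt.comp x (hasFDerivAt_incl_space τ x)
  rw [hasFDerivAt_pd h]; simp

lemma deriv_slice (hP : DifferentiableAt ℝ P (t, x)) :
    deriv (fun σ => P (σ, x)) t = fderiv ℝ P (t, x) (1, 0) := by
  have h : HasFDerivAt (fun σ : ℝ => P (σ, x))
      ((fderiv ℝ P (t, x)).comp ((ContinuousLinearMap.id ℝ ℝ).prod 0)) t :=
    hP.hasFDerivAt.comp t (hasFDerivAt_incl_time t x)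
  rw [h.hasDerivAt.deriv]; simp

lemma deriv_fderiv_slice (hQ : DifferentiableAt ℝ (fderiv ℝ P) (t, x)) (v : ℝ × (Fin n → ℝ)) :
    deriv (fun σ => fderiv ℝ P (σ, x) v) t = fderiv ℝ (fderiv ℝ P) (t, x) (1, 0) v := by
  have h2 : HasFDerivAt (fun σ : ℝ => fderiv ℝ P (σ, x))
      ((fderiv ℝ (fderiv ℝ P) (t, x)).comp ((ContinuousLinearMap.id ℝ ℝ).prod 0)) t :=
    hQ.hasFDerivAt.comp t (hasFDerivAt_incl_time t x)
  have h3 := h2.clm_apply (hasFDerivAt_const v t)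
  rw [h3.hasDerivAt.deriv]; simp

lemma pd_fderiv_slice (hQ : DifferentiableAt ℝ (fderiv ℝ P) (t, x)) (i : Fin n)
    (v : ℝ × (Fin n → ℝ)) :
    pd i (fun y => fderiv ℝ P (t, y) v) x = fderiv ℝ (fderiv ℝ P) (t, x) (0, Pi.single i 1) v := by
  have h2 : HasFDerivAt (fun y : Fin n → ℝ => fderiv ℝ P (t, y))
      ((fderiv ℝ (fderiv ℝ P) (t, x)).comp
        ((0 : (Fin n → ℝ) →L[ℝ] ℝ).prod (ContinuousLinearMap.id ℝ _))) x :=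
    hQ.hasFDerivAt.comp x (hasFDerivAt_incl_space t x)
  have h3 := h2.clm_apply (hasFDerivAt_const v x)
  rw [hasFDerivAt_pd h3]; simp
lemma two_le_infty : (2 : WithTop ℕ∞) ≤ (∞ : WithTop ℕ∞) := by
  have h : ((2:ℕ∞) : WithTop ℕ∞) ≤ ((⊤:ℕ∞) : WithTop ℕ∞) := WithTop.coe_le_coe.mpr le_top
  simpa using h

variable {n : ℕ} {P : ℝ × (Fin n → ℝ) → ℝ} {t : ℝ} {x : Fin n → ℝ}

/-- eventual smoothness hypothesis -/
def EvSmooth (P : ℝ × (Fin n → ℝ) → ℝ) (t : ℝ) (x : Fin n → ℝ) : Prop :=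
  ∀ᶠ p in 𝓝 (t, x), ContDiffAt ℝ (∞ : WithTop ℕ∞) P p

lemma EvSmooth.self (hP : EvSmooth P t x) : ContDiffAt ℝ (∞ : WithTop ℕ∞) P (t, x) :=
  hP.self_of_nhds

lemma EvSmooth.diff (hP : EvSmooth P t x) : DifferentiableAt ℝ P (t, x) :=
  hP.self.differentiableAt (by simp)

lemma EvSmooth.fderiv_diff (hP : EvSmooth P t x) : DifferentiableAt ℝ (fderiv ℝ P) (t, x) :=
  (hP.self.fderiv_right (m := (∞ : WithTop ℕ∞)) (by simp)).differentiableAt (by simp)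

lemma EvSmooth.open_set (hP : EvSmooth P t x) :
    ∃ U : Set (ℝ × (Fin n → ℝ)), IsOpen U ∧ (t, x) ∈ U ∧
      ∀ p ∈ U, ContDiffAt ℝ (∞ : WithTop ℕ∞) P p := by
  rcases eventually_nhds_iff.1 hP with ⟨U, hU, hUo, hUz⟩
  exact ⟨U, hUo, hUz, hU⟩

/-- Eventually in τ, the i-th space partial of the τ-slice is the full fderiv applied. -/
lemma EvSmooth.ev_pd_slice (hP : EvSmooth P t x) (i : Fin n) :
    (fun σ => pd i (fun y => P (σ, y)) x) =ᶠ[𝓝 t]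
      (fun σ => fderiv ℝ P (σ, x) (0, Pi.single i 1)) := by
  have hc : Tendsto (fun σ : ℝ => (σ, x)) (𝓝 t) (𝓝 (t, x)) :=
    ((continuous_id.prodMk continuous_const).tendsto t)
  filter_upwards [hc.eventually hP] with σ hσ
  exact pd_slice (hσ.differentiableAt (by simp)) i

lemma EvSmooth.ev_deriv_slice (hP : EvSmooth P t x) :
    (fun y => deriv (fun σ => P (σ, y)) t) =ᶠ[𝓝 x]
      (fun y => fderiv ℝ P (t, y) (1, 0)) := by
  have hc : Tendsto (fun y : Fin n → ℝ => (t, y)) (𝓝 x) (𝓝 (t, x)) :=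
    ((continuous_const.prodMk continuous_id).tendsto x)
  filter_upwards [hc.eventually hP] with y hy
  exact deriv_slice (hy.differentiableAt (by simp))

lemma EvSmooth.diff_time_pd (hP : EvSmooth P t x) (i : Fin n) :
    DifferentiableAt ℝ (fun σ => pd i (fun y => P (σ, y)) x) t := by
  rw [(hP.ev_pd_slice i).differentiableAt_iff]
  have h2 : HasFDerivAt (fun σ : ℝ => fderiv ℝ P (σ, x))
      ((fderiv ℝ (fderiv ℝ P) (t, x)).comp ((ContinuousLinearMap.id ℝ ℝ).prod 0)) t :=
    hP.fderiv_diff.hasFDerivAt.comp t ((hasFDerivAt_id t).prodMk (hasFDerivAt_const x t))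
  exact (h2.clm_apply (hasFDerivAt_const _ t)).differentiableAt

lemma EvSmooth.diff_time_val (hP : EvSmooth P t x) :
    DifferentiableAt ℝ (fun σ => P (σ, x)) t :=
  hP.diff.comp t ((differentiableAt_id.prodMk (differentiableAt_const x)))

/-- Mixed Schwarz: time derivative and space partial commute. -/
lemma EvSmooth.deriv_pd_comm (hP : EvSmooth P t x) (i : Fin n) :
    deriv (fun σ => pd i (fun y => P (σ, y)) x) t
      = pd i (fun y => deriv (fun σ => P (σ, y)) t) x := by
  rw [(hP.ev_pd_slice i).deriv_eq, deriv_fderiv_slice hP.fderiv_diff,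
    pd_congr_nhds hP.ev_deriv_slice, pd_fderiv_slice hP.fderiv_diff]
  exact (hP.self.isSymmSndFDerivAt (by simpa [minSmoothness_of_isRCLikeNormedField] using two_le_infty)) _ _


lemma EvSmooth.fderiv_apply (hP : EvSmooth P t x) (v : ℝ × (Fin n → ℝ)) :
    EvSmooth (fun p => fderiv ℝ P p v) t x := by
  filter_upwards [hP] with p hp
  exact (hp.fderiv_right (m := (∞ : WithTop ℕ∞)) (by simp)).clm_apply contDiffAt_const

lemma EvSmooth.mono_pt (hP : EvSmooth P t x) :
    ∀ᶠ p in 𝓝 (t, x), EvSmooth P p.1 p.2 := by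
  rcases eventually_nhds_iff.1 hP with ⟨U, hU, hUo, hUz⟩
  filter_upwards [hUo.mem_nhds hUz] with p hp
  exact eventually_nhds_iff.2 ⟨U, hU, hUo, hp⟩

/-- Step 1: eventually in time, second space partials of slices are slices of `Q`. -/
lemma EvSmooth.ev_pdpd (hP : EvSmooth P t x) (i : Fin n) :
    (fun σ => pd i (pd i (fun y => P (σ, y))) x) =ᶠ[𝓝 t]
      (fun σ => pd i (fun y => fderiv ℝ P (σ, y) (0, Pi.single i 1)) x) := by
  rcases eventually_nhds_iff.1 hP with ⟨U, hU, hUo, hUz⟩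
  have hc : Tendsto (fun σ : ℝ => (σ, x)) (𝓝 t) (𝓝 (t, x)) :=
    ((continuous_id.prodMk continuous_const).tendsto t)
  filter_upwards [hc.eventually (hUo.mem_nhds hUz)] with σ hσ
  refine pd_congr_nhds ?_ i
  have hc2 : Tendsto (fun y : Fin n → ℝ => (σ, y)) (𝓝 x) (𝓝 (σ, x)) :=
    ((continuous_const.prodMk continuous_id).tendsto x)
  filter_upwards [hc2.eventually (hUo.mem_nhds hσ)] with y hy
  exact pd_slice ((hU _ hy).differentiableAt (by simp)) i

lemma EvSmooth.diff_time_pdpd (hP : EvSmooth P t x) (i : Fin n) :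
    DifferentiableAt ℝ (fun σ => pd i (pd i (fun y => P (σ, y))) x) t := by
  rw [(hP.ev_pdpd i).differentiableAt_iff]
  exact (hP.fderiv_apply (0, Pi.single i 1)).diff_time_pd i

lemma EvSmooth.deriv_pdpd_comm (hP : EvSmooth P t x) (i : Fin n) :
    deriv (fun σ => pd i (pd i (fun y => P (σ, y))) x) t
      = pd i (pd i (fun y => deriv (fun σ => P (σ, y)) t)) x := by
  rw [(hP.ev_pdpd i).deriv_eq, (hP.fderiv_apply (0, Pi.single i 1)).deriv_pd_comm i]
  refine pd_congr_nhds ?_ i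
  rcases eventually_nhds_iff.1 hP with ⟨U, hU, hUo, hUz⟩
  have hc2 : Tendsto (fun y : Fin n → ℝ => (t, y)) (𝓝 x) (𝓝 (t, x)) :=
    ((continuous_const.prodMk continuous_id).tendsto x)
  filter_upwards [hc2.eventually (hUo.mem_nhds hUz), hc2.eventually hP.mono_pt] with y hy hy2
  have hy3 : EvSmooth P t y := hy2
  have e1 : (fun σ => fderiv ℝ P (σ, y) (0, Pi.single i 1))
      =ᶠ[𝓝 t] (fun σ => pd i (fun y' => P (σ, y')) y) := by
    have hc3 : Tendsto (fun σ : ℝ => (σ, y)) (𝓝 t) (𝓝 (t, y)) :=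
      ((continuous_id.prodMk continuous_const).tendsto t)
    filter_upwards [hc3.eventually (hUo.mem_nhds hy)] with σ hσ
    exact (pd_slice ((hU _ hσ).differentiableAt (by simp)) i).symm
  calc deriv (fun σ => fderiv ℝ P (σ, y) (0, Pi.single i 1)) t
      = deriv (fun σ => pd i (fun y' => P (σ, y')) y) t := e1.deriv_eq
    _ = pd i (fun y' => deriv (fun σ => P (σ, y')) t) y := hy3.deriv_pd_comm i

lemma EvSmooth.ev_deriv_time {n : ℕ} {P : ℝ × (Fin n → ℝ) → ℝ} {t : ℝ} {x : Fin n → ℝ}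
    (hP : EvSmooth P t x) :
    (fun τ => deriv (fun σ => P (σ, x)) τ) =ᶠ[𝓝 t] (fun τ => fderiv ℝ P (τ, x) (1, 0)) := by
  have hc : Tendsto (fun σ : ℝ => (σ, x)) (𝓝 t) (𝓝 (t, x)) :=
    ((continuous_id.prodMk continuous_const).tendsto t)
  filter_upwards [hc.eventually hP] with τ hτ
  exact deriv_slice (hτ.differentiableAt (by simp))

lemma EvSmooth.diff_time_deriv {n : ℕ} {P : ℝ × (Fin n → ℝ) → ℝ} {t : ℝ} {x : Fin n → ℝ}
    (hP : EvSmooth P t x) :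
    DifferentiableAt ℝ (fun τ => deriv (fun σ => P (σ, x)) τ) t := by
  rw [hP.ev_deriv_time.differentiableAt_iff]
  have h2 : HasFDerivAt (fun σ : ℝ => fderiv ℝ P (σ, x))
      ((fderiv ℝ (fderiv ℝ P) (t, x)).comp ((ContinuousLinearMap.id ℝ ℝ).prod 0)) t :=
    hP.fderiv_diff.hasFDerivAt.comp t ((hasFDerivAt_id t).prodMk (hasFDerivAt_const x t))
  exact (h2.clm_apply (hasFDerivAt_const _ t)).differentiableAt

end SliceLemmas
section PDE
variable {n : ℕ} {c q : ℝ} {u : ℝ → (Fin n → ℝ) → ℝ}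

lemma deriv_zero_of_eqOn_Ici {g : ℝ → ℝ} {t : ℝ} (ht : 0 ≤ t) (hg : DifferentiableAt ℝ g t)
    (h0 : ∀ τ : ℝ, 0 ≤ τ → g τ = 0) : deriv g t = 0 := by
  have h1 : HasDerivWithinAt g (deriv g t) (Ici 0) t := hg.hasDerivAt.hasDerivWithinAt
  have h2 : HasDerivWithinAt g 0 (Ici 0) t := by
    have h3 : HasDerivWithinAt (fun _ : ℝ => (0:ℝ)) 0 (Ici 0) t :=
      (hasDerivAt_const _ _).hasDerivWithinAt
    exact h3.congr (fun y hy => h0 y hy) (h0 t ht)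
  exact UniqueDiffWithinAt.eq_deriv _ (uniqueDiffOn_Ici 0 t ht) h1 h2

lemma udiff_slice (hu : ContDiff ℝ (∞ : WithTop ℕ∞) (fun p : ℝ × (Fin n → ℝ) => u p.1 p.2))
    (τ : ℝ) : ContDiff ℝ (∞ : WithTop ℕ∞) (u τ) := by
  have h : ContDiff ℝ (∞ : WithTop ℕ∞)
      ((fun p : ℝ × (Fin n → ℝ) => u p.1 p.2) ∘ (fun y : Fin n → ℝ => (τ, y))) :=
    hu.comp (contDiff_const.prodMk contDiff_id)
  exact h

lemma udiff_time (hu : ContDiff ℝ (∞ : WithTop ℕ∞) (fun p : ℝ × (Fin n → ℝ) => u p.1 p.2))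
    (y : Fin n → ℝ) {τ : ℝ} : DifferentiableAt ℝ (fun σ => u σ y) τ := by
  have h0 : Differentiable ℝ (fun p : ℝ × (Fin n → ℝ) => u p.1 p.2) := hu.differentiable (by simp)
  have h : DifferentiableAt ℝ
      ((fun p : ℝ × (Fin n → ℝ) => u p.1 p.2) ∘ (fun σ : ℝ => (σ, y))) τ :=
    (h0 _).comp τ (differentiableAt_id.prodMk (differentiableAt_const y))
  exact h

lemma logslice_contDiff (hu : ContDiff ℝ (∞ : WithTop ℕ∞) (fun p : ℝ × (Fin n → ℝ) => u p.1 p.2))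
    {τ : ℝ} (hpos : ∀ y, 0 < u τ y) :
    ContDiff ℝ (∞ : WithTop ℕ∞) (fun y => Real.log (u τ y)) :=
  contDiff_iff_contDiffAt.2 fun y => ((udiff_slice hu τ).contDiffAt).log (hpos y).ne'

lemma pd_u_slice (hu : ContDiff ℝ (∞ : WithTop ℕ∞) (fun p : ℝ × (Fin n → ℝ) => u p.1 p.2))
    {τ : ℝ} (hpos : ∀ y, 0 < u τ y) (i : Fin n) (y : Fin n → ℝ) :
    pd i (u τ) y = u τ y * pd i (fun y' => Real.log (u τ y')) y := by
  have hrep : u τ = fun y' => Real.exp (Real.log (u τ y')) :=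
    funext fun y' => (Real.exp_log (hpos y')).symm
  have h1 : pd i (u τ) y = pd i (fun y' => Real.exp (Real.log (u τ y'))) y :=
    congrArg (fun f => pd i f y) hrep
  rw [h1, pd_exp ((logslice_contDiff hu hpos).differentiable (by simp) y), Real.exp_log (hpos y)]

lemma lap_u_slice (hu : ContDiff ℝ (∞ : WithTop ℕ∞) (fun p : ℝ × (Fin n → ℝ) => u p.1 p.2))
    {τ : ℝ} (hpos : ∀ y, 0 < u τ y) (y : Fin n → ℝ) :
    lap (u τ) y = u τ y * (lap (fun y' => Real.log (u τ y')) y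
      + ∑ i, (pd i (fun y' => Real.log (u τ y')) y) ^ 2) := by
  have hl : ContDiff ℝ (∞ : WithTop ℕ∞) (fun y' => Real.log (u τ y')) := logslice_contDiff hu hpos
  have hpd : ∀ i : Fin n, pd i (u τ) = fun y' => u τ y' * pd i (fun y'' => Real.log (u τ y'')) y' :=
    fun i => funext fun y' => pd_u_slice hu hpos i y'
  have hud : Differentiable ℝ (u τ) := (udiff_slice hu τ).differentiable (by simp)
  have step : ∀ i : Fin n, pd i (pd i (u τ)) y
      = u τ y * pd i (pd i (fun y' => Real.log (u τ y'))) y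
        + pd i (fun y' => Real.log (u τ y')) y * (u τ y * pd i (fun y' => Real.log (u τ y')) y) := by
    intro i
    rw [hpd i, pd_mul (hud y) ((contDiff_pd hl i).differentiable (by simp) y),
      pd_u_slice hu hpos i y]
  have : lap (u τ) y = ∑ i, (u τ y * pd i (pd i (fun y' => Real.log (u τ y'))) y
      + pd i (fun y' => Real.log (u τ y')) y * (u τ y * pd i (fun y' => Real.log (u τ y')) y)) :=
    Finset.sum_congr rfl fun i _ => step i
  rw [this, Finset.sum_add_distrib, ← Finset.mul_sum, mul_add, lap]
  congr 1
  rw [Finset.mul_sum]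
  exact Finset.sum_congr rfl fun i _ => by ring

lemma keypde (hu : ContDiff ℝ (∞ : WithTop ℕ∞) (fun p : ℝ × (Fin n → ℝ) => u p.1 p.2))
    (hpos : ∀ t x, 0 ≤ t → 0 < u t x)
    (hpde : ∀ t x, 0 ≤ t →
      deriv (fun τ => u τ x) t = lap (u t) x + c * u t x * (1 - u t x))
    {τ : ℝ} (hτ : 0 ≤ τ) (y : Fin n → ℝ) :
    deriv (fun σ => Real.log (u σ y)) τ
      = lap (fun y' => Real.log (u τ y')) y
        + (∑ i, (pd i (fun y' => Real.log (u τ y')) y) ^ 2) + c * (1 - u τ y) := by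
  have hp : ∀ y', 0 < u τ y' := fun y' => hpos τ y' hτ
  have hlog : HasDerivAt (fun σ => Real.log (u σ y))
      (deriv (fun σ => u σ y) τ / u τ y) τ := ((udiff_time hu y).hasDerivAt).log (hp y).ne'
  rw [hlog.deriv, hpde τ y hτ, lap_u_slice hu hp y]
  field_simp [(hp y).ne']
end PDE


section Hpt
variable {n : ℕ} {s c q : ℝ} {u : ℝ → (Fin n → ℝ) → ℝ}

lemma W_slice_rep {τ : ℝ} {y : Fin n → ℝ}
    (hnear : ∀ᶠ p : ℝ × (Fin n → ℝ) in 𝓝 (τ, y), 0 < u p.1 p.2) (q : ℝ) :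
    (fun y' => Wfun q u τ y') =ᶠ[𝓝 y] (fun y' => Real.exp (-q * Real.log (u τ y'))) := by
  have hc : Tendsto (fun y' : Fin n → ℝ => (τ, y')) (𝓝 y) (𝓝 (τ, y)) :=
    ((continuous_const.prodMk continuous_id).tendsto y)
  filter_upwards [hc.eventually hnear] with y' hy'
  rw [Wfun, Real.rpow_def_of_pos hy', mul_comm]

lemma W_time_rep {τ : ℝ} {y : Fin n → ℝ}
    (hnear : ∀ᶠ p : ℝ × (Fin n → ℝ) in 𝓝 (τ, y), 0 < u p.1 p.2) (q : ℝ) :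
    (fun σ => Wfun q u σ y) =ᶠ[𝓝 τ] (fun σ => Real.exp (-q * Real.log (u σ y))) := by
  have hc : Tendsto (fun σ : ℝ => (σ, y)) (𝓝 τ) (𝓝 (τ, y)) :=
    ((continuous_id.prodMk continuous_const).tendsto τ)
  filter_upwards [hc.eventually hnear] with σ hσ
  rw [Wfun, Real.rpow_def_of_pos hσ, mul_comm]

lemma pd_W_slice (hu : ContDiff ℝ (∞ : WithTop ℕ∞) (fun p : ℝ × (Fin n → ℝ) => u p.1 p.2))
    {τ : ℝ} {y : Fin n → ℝ}
    (hnear : ∀ᶠ p : ℝ × (Fin n → ℝ) in 𝓝 (τ, y), 0 < u p.1 p.2) (q : ℝ) (i : Fin n) :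
    pd i (Wfun q u τ) y
      = Wfun q u τ y * (-q * pd i (fun y' => Real.log (u τ y')) y) := by
  have hp : 0 < u τ y := hnear.self_of_nhds
  have hld : DifferentiableAt ℝ (fun y' => Real.log (u τ y')) y :=
    (((udiff_slice hu τ).contDiffAt).log hp.ne').differentiableAt (by simp)
  have h1 : pd i (Wfun q u τ) y
      = pd i (fun y' => Real.exp (-q * Real.log (u τ y'))) y :=
    pd_congr_nhds (W_slice_rep hnear q) i
  rw [h1, pd_exp (hld.const_mul (-q)), pd_const_mul hld (-q)]
  have h2 : Wfun q u τ y = Real.exp (-q * Real.log (u τ y)) := by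
    rw [Wfun, Real.rpow_def_of_pos hp, mul_comm]
  rw [h2]

lemma W_rpow_inv {τ : ℝ} {y : Fin n → ℝ} (hp : 0 < u τ y) (hq : 0 < q) :
    Wfun q u τ y ^ (-1 / q : ℝ) = u τ y := by
  rw [Wfun, ← Real.rpow_mul hp.le]
  have : (-q : ℝ) * (-1 / q) = 1 := by field_simp
  rw [this, Real.rpow_one]

lemma deriv_W_time (hu : ContDiff ℝ (∞ : WithTop ℕ∞) (fun p : ℝ × (Fin n → ℝ) => u p.1 p.2))
    {τ : ℝ} {y : Fin n → ℝ}
    (hnear : ∀ᶠ p : ℝ × (Fin n → ℝ) in 𝓝 (τ, y), 0 < u p.1 p.2) (q : ℝ) :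
    deriv (fun σ => Wfun q u σ y) τ
      = Wfun q u τ y * (-q * deriv (fun σ => Real.log (u σ y)) τ) := by
  have hp : 0 < u τ y := hnear.self_of_nhds
  have hdlog : HasDerivAt (fun σ => Real.log (u σ y))
      (deriv (fun σ => u σ y) τ / u τ y) τ := ((udiff_time hu y).hasDerivAt).log hp.ne'
  have hexp : HasDerivAt (fun σ => Real.exp (-q * Real.log (u σ y)))
      (Real.exp (-q * Real.log (u τ y)) * (-q * (deriv (fun σ => u σ y) τ / u τ y))) τ :=
    (hdlog.const_mul (-q)).exp
  rw [(W_time_rep hnear q).deriv_eq, hexp.deriv]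
  have h2 : Wfun q u τ y = Real.exp (-q * Real.log (u τ y)) := by
    rw [Wfun, Real.rpow_def_of_pos hp, mul_comm]
  rw [h2, hdlog.deriv]

lemma H_point (hu : ContDiff ℝ (∞ : WithTop ℕ∞) (fun p : ℝ × (Fin n → ℝ) => u p.1 p.2))
    (hq : 0 < q) {τ : ℝ} {y : Fin n → ℝ}
    (hnear : ∀ᶠ p : ℝ × (Fin n → ℝ) in 𝓝 (τ, y), 0 < u p.1 p.2) :
    Hfun (s * q ^ 2) (s * q) c q u τ y
      = q ^ 2 * ((∑ j, (pd j (fun y' => Real.log (u τ y')) y) ^ 2)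
          + s * c * (1 - u τ y) - s * deriv (fun σ => Real.log (u σ y)) τ) := by
  have hp : 0 < u τ y := hnear.self_of_nhds
  have hWpos : 0 < Wfun q u τ y := Real.rpow_pos_of_pos hp _
  have e1 : (∑ i, (pd i (Wfun q u τ) y) ^ 2)
      = ((Wfun q u τ y) ^ 2 * q ^ 2) * ∑ j, (pd j (fun y' => Real.log (u τ y')) y) ^ 2 := by
    rw [Finset.mul_sum]
    exact Finset.sum_congr rfl fun i _ => by rw [pd_W_slice hu hnear q i]; ring
  rw [Hfun, e1, W_rpow_inv hp hq, deriv_W_time hu hnear q]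
  field_simp
  ring
end Hpt

section SpatialCalc
variable {n : ℕ} {l : (Fin n → ℝ) → ℝ} {x : Fin n → ℝ}

lemma pd_pd_eq_fderiv2 (hl : ContDiff ℝ (∞ : WithTop ℕ∞) l) (i j : Fin n) (x : Fin n → ℝ) :
    pd i (pd j l) x = fderiv ℝ (fderiv ℝ l) x (Pi.single i 1) (Pi.single j 1) := by
  have hd : DifferentiableAt ℝ (fderiv ℝ l) x :=
    ((hl.fderiv_right (m := (∞ : WithTop ℕ∞)) (by simp)).differentiable (by simp)) x
  calc pd i (pd j l) x
      = fderiv ℝ (fun y => fderiv ℝ l y (Pi.single j 1)) x (Pi.single i 1) := rfl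
    _ = fderiv ℝ (fderiv ℝ l) x (Pi.single i 1) (Pi.single j 1) := by
        rw [fderiv_clm_apply hd (differentiableAt_const _)]
        simp

lemma pd_comm (hl : ContDiff ℝ (∞ : WithTop ℕ∞) l) (i j : Fin n) (x : Fin n → ℝ) :
    pd i (pd j l) x = pd j (pd i l) x := by
  rw [pd_pd_eq_fderiv2 hl i j x, pd_pd_eq_fderiv2 hl j i x]
  exact (hl.contDiffAt.isSymmSndFDerivAt (by simpa [minSmoothness_of_isRCLikeNormedField] using two_le_infty)) _ _

lemma pd3_comm (hl : ContDiff ℝ (∞ : WithTop ℕ∞) l) (i j : Fin n) (x : Fin n → ℝ) :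
    pd i (pd i (pd j l)) x = pd j (pd i (pd i l)) x := by
  have e : pd i (pd j l) = pd j (pd i l) := funext fun y => pd_comm hl i j y
  rw [e]
  exact pd_comm (contDiff_pd hl i) i j x
end SpatialCalc

section TimeSide
variable {n : ℕ} {s c q : ℝ} {u : ℝ → (Fin n → ℝ) → ℝ}

lemma hEv_log (hu : ContDiff ℝ (∞ : WithTop ℕ∞) (fun p : ℝ × (Fin n → ℝ) => u p.1 p.2))
    (hpos : ∀ t x, 0 ≤ t → 0 < u t x) {t : ℝ} {x : Fin n → ℝ} (ht : 0 ≤ t) :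
    EvSmooth (fun p : ℝ × (Fin n → ℝ) => Real.log (u p.1 p.2)) t x := by
  have hopen : IsOpen {p : ℝ × (Fin n → ℝ) | 0 < u p.1 p.2} :=
    isOpen_lt continuous_const hu.continuous
  have hmem : (t, x) ∈ {p : ℝ × (Fin n → ℝ) | 0 < u p.1 p.2} := hpos t x ht
  show ∀ᶠ p in 𝓝 (t, x),
    ContDiffAt ℝ (∞ : WithTop ℕ∞) (fun p : ℝ × (Fin n → ℝ) => Real.log (u p.1 p.2)) p
  filter_upwards [hopen.mem_nhds hmem] with p hp
  exact (hu.contDiffAt).log (ne_of_gt hp)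

lemma deriv_H_time (hu : ContDiff ℝ (∞ : WithTop ℕ∞) (fun p : ℝ × (Fin n → ℝ) => u p.1 p.2))
    (hpos : ∀ t x, 0 ≤ t → 0 < u t x)
    (hpde : ∀ t x, 0 ≤ t →
      deriv (fun τ => u τ x) t = lap (u t) x + c * u t x * (1 - u t x))
    (hq : 0 < q) {t : ℝ} {x : Fin n → ℝ} (ht : 0 ≤ t) :
    deriv (fun τ => Hfun (s * q ^ 2) (s * q) c q u τ x) t
      = q ^ 2 * (2 * (1 - s) * (∑ j, pd j (fun y => Real.log (u t y)) x
            * pd j (fun y => deriv (fun σ => Real.log (u σ y)) t) x)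
          - s * ∑ j, pd j (pd j (fun y => deriv (fun σ => Real.log (u σ y)) t)) x) := by
  have hEv : EvSmooth (fun p : ℝ × (Fin n → ℝ) => Real.log (u p.1 p.2)) t x :=
    hEv_log hu hpos ht
  have hopen : IsOpen {p : ℝ × (Fin n → ℝ) | 0 < u p.1 p.2} :=
    isOpen_lt continuous_const hu.continuous
  have hHev : (fun τ => Hfun (s * q ^ 2) (s * q) c q u τ x) =ᶠ[𝓝 t]
      (fun τ => q ^ 2 * ((∑ j, (pd j (fun y => Real.log (u τ y)) x) ^ 2)
        + s * c * (1 - u τ x) - s * deriv (fun σ => Real.log (u σ x)) τ)) := by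
    have hc : Tendsto (fun τ : ℝ => (τ, x)) (𝓝 t) (𝓝 (t, x)) :=
      ((continuous_id.prodMk continuous_const).tendsto t)
    filter_upwards [hc.eventually (hopen.mem_nhds (hpos t x ht))] with τ hτ
    exact H_point hu hq (eventually_of_mem (hopen.mem_nhds hτ) fun p hp => hp)
  -- differentiability of the pieces
  have d1 : ∀ j : Fin n, DifferentiableAt ℝ (fun τ => pd j (fun y => Real.log (u τ y)) x) t :=
    fun j => hEv.diff_time_pd j
  have dsum : DifferentiableAt ℝ (fun τ => ∑ j, (pd j (fun y => Real.log (u τ y)) x) ^ 2) t :=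
    DifferentiableAt.fun_sum fun j _ => (d1 j).pow 2
  have du : DifferentiableAt ℝ (fun τ => u τ x) t := udiff_time hu x
  have d2 : DifferentiableAt ℝ (fun τ => s * c * (1 - u τ x)) t :=
    ((differentiableAt_const _).sub du).const_mul _
  have d3 : DifferentiableAt ℝ (fun τ => deriv (fun σ => Real.log (u σ x)) τ) t :=
    hEv.diff_time_deriv
  have dsum2 : DifferentiableAt ℝ
      (fun τ => ∑ j, pd j (pd j (fun y => Real.log (u τ y))) x) t :=
    DifferentiableAt.fun_sum fun j _ => hEv.diff_time_pdpd j
  have dc1u : DifferentiableAt ℝ (fun τ => c * (1 - u τ x)) t :=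
    ((differentiableAt_const _).sub du).const_mul _
  have drest : DifferentiableAt ℝ (fun τ =>
      (∑ j, pd j (pd j (fun y => Real.log (u τ y))) x)
        + (∑ j, (pd j (fun y => Real.log (u τ y)) x) ^ 2) + c * (1 - u τ x)) t :=
    (dsum2.add dsum).add dc1u
  -- derivative of the squares sum
  have dF1 : deriv (fun τ => ∑ j, (pd j (fun y => Real.log (u τ y)) x) ^ 2) t
      = 2 * ∑ j, pd j (fun y => Real.log (u t y)) x
          * pd j (fun y => deriv (fun σ => Real.log (u σ y)) t) x := by
    have h := HasDerivAt.fun_sum (fun (j : Fin n) (_ : j ∈ Finset.univ) =>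
      ((d1 j).hasDerivAt.fun_pow 2))
    rw [h.deriv, Finset.mul_sum]
    refine Finset.sum_congr rfl fun j _ => ?_
    rw [hEv.deriv_pd_comm j]
    push_cast
    ring
  -- derivative of the second-derivative sum
  have dF2 : deriv (fun τ => ∑ j, pd j (pd j (fun y => Real.log (u τ y))) x) t
      = ∑ j, pd j (pd j (fun y => deriv (fun σ => Real.log (u σ y)) t)) x := by
    have h := HasDerivAt.fun_sum (fun (j : Fin n) (_ : j ∈ Finset.univ) =>
      (hEv.diff_time_pdpd j).hasDerivAt)
    rw [h.deriv]
    exact Finset.sum_congr rfl fun j _ => hEv.deriv_pdpd_comm j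
  -- derivative of c * (1 - u)
  have dF3 : deriv (fun τ => c * (1 - u τ x)) t = c * (0 - deriv (fun τ => u τ x) t) :=
    (((hasDerivAt_const t (1 : ℝ)).sub du.hasDerivAt).const_mul c).deriv
  have dF2' : deriv (fun τ => s * c * (1 - u τ x)) t
      = s * c * (0 - deriv (fun τ => u τ x) t) :=
    (((hasDerivAt_const t (1 : ℝ)).sub du.hasDerivAt).const_mul (s * c)).deriv
  -- the g-trick for the second time derivative
  have hg0 : ∀ τ, 0 ≤ τ → (deriv (fun σ => Real.log (u σ x)) τ
      - ((∑ j, pd j (pd j (fun y => Real.log (u τ y))) x)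
        + (∑ j, (pd j (fun y => Real.log (u τ y)) x) ^ 2) + c * (1 - u τ x))) = 0 := by
    intro τ hτ
    have hk := keypde (c := c) hu hpos hpde hτ x
    have hlap : lap (fun y' => Real.log (u τ y')) x
        = ∑ j, pd j (pd j (fun y => Real.log (u τ y))) x := rfl
    rw [sub_eq_zero, hk, hlap]
  have hgd : DifferentiableAt ℝ (fun τ => deriv (fun σ => Real.log (u σ x)) τ
      - ((∑ j, pd j (pd j (fun y => Real.log (u τ y))) x)
        + (∑ j, (pd j (fun y => Real.log (u τ y)) x) ^ 2) + c * (1 - u τ x))) t :=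
    d3.sub drest
  have hgz : deriv (fun τ => deriv (fun σ => Real.log (u σ x)) τ
      - ((∑ j, pd j (pd j (fun y => Real.log (u τ y))) x)
        + (∑ j, (pd j (fun y => Real.log (u τ y)) x) ^ 2) + c * (1 - u τ x))) t = 0 :=
    deriv_zero_of_eqOn_Ici ht hgd hg0
  have hsplit : (fun τ => deriv (fun σ => Real.log (u σ x)) τ)
      = fun τ => (deriv (fun σ => Real.log (u σ x)) τ
        - ((∑ j, pd j (pd j (fun y => Real.log (u τ y))) x)
          + (∑ j, (pd j (fun y => Real.log (u τ y)) x) ^ 2) + c * (1 - u τ x)))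
        + ((∑ j, pd j (pd j (fun y => Real.log (u τ y))) x)
          + (∑ j, (pd j (fun y => Real.log (u τ y)) x) ^ 2) + c * (1 - u τ x)) :=
    funext fun τ => by ring
  have dLder : deriv (fun τ => deriv (fun σ => Real.log (u σ x)) τ) t
      = (∑ j, pd j (pd j (fun y => deriv (fun σ => Real.log (u σ y)) t)) x)
        + 2 * (∑ j, pd j (fun y => Real.log (u t y)) x
            * pd j (fun y => deriv (fun σ => Real.log (u σ y)) t) x)
        + c * (0 - deriv (fun τ => u τ x) t) := by
    rw [hsplit, deriv_fun_add hgd drest, hgz, zero_add, deriv_fun_add (dsum2.fun_add dsum) dc1u,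
      deriv_fun_add dsum2 dsum, dF1, dF2, dF3]
  -- put everything together
  rw [hHev.deriv_eq, deriv_const_mul _ ((dsum.fun_add d2).fun_sub (d3.const_mul s)),
    deriv_fun_sub (dsum.fun_add d2) (d3.const_mul s), deriv_fun_add dsum d2,
    deriv_const_mul _ d3, dLder, dF1, dF2']
  ring
end TimeSide

section SpatialExp
variable {n : ℕ} {l : (Fin n → ℝ) → ℝ} {x : Fin n → ℝ}

lemma contDiff_sumsq (hl : ContDiff ℝ (∞ : WithTop ℕ∞) l) :
    ContDiff ℝ (∞ : WithTop ℕ∞) (fun y => ∑ j, (pd j l y) ^ 2) :=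
  ContDiff.sum fun j _ => (contDiff_pd hl j).pow 2

lemma contDiff_lapfun (hl : ContDiff ℝ (∞ : WithTop ℕ∞) l) :
    ContDiff ℝ (∞ : WithTop ℕ∞) (fun y => lap l y) := contDiff_lap hl

lemma pd_sumsq (hl : ContDiff ℝ (∞ : WithTop ℕ∞) l) (k : Fin n) (x : Fin n → ℝ) :
    pd k (fun y => ∑ j, (pd j l y) ^ 2) x = 2 * ∑ j, pd j l x * pd k (pd j l) x := by
  rw [pd_sum Finset.univ
    (fun j _ => ((contDiff_pd hl j).differentiable (by simp) x).fun_pow 2) k, Finset.mul_sum]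
  refine Finset.sum_congr rfl fun j _ => ?_
  rw [pd_sq ((contDiff_pd hl j).differentiable (by simp) x) k]
  ring

lemma pd_lapfun (hl : ContDiff ℝ (∞ : WithTop ℕ∞) l) (k : Fin n) (x : Fin n → ℝ) :
    pd k (fun y => lap l y) x = ∑ j, pd k (pd j (pd j l)) x := by
  have e : (fun y => lap l y) = fun y => ∑ j, pd j (pd j l) y := rfl
  rw [e, pd_sum Finset.univ
    (fun j _ => (contDiff_pd (contDiff_pd hl j) j).differentiable (by simp) x) k]

lemma lap_sumsq (hl : ContDiff ℝ (∞ : WithTop ℕ∞) l) (x : Fin n → ℝ) :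
    lap (fun y => ∑ j, (pd j l y) ^ 2) x
      = 2 * (∑ i, ∑ j, (pd i (pd j l) x) ^ 2)
        + 2 * (∑ i, ∑ j, pd i l x * pd i (pd j (pd j l)) x) := by
  have e1 : ∀ i : Fin n, pd i (fun y => ∑ j, (pd j l y) ^ 2)
      = fun y => 2 * ∑ j, pd j l y * pd i (pd j l) y :=
    fun i => funext fun y => pd_sumsq hl i y
  have step : ∀ i : Fin n, pd i (pd i (fun y => ∑ j, (pd j l y) ^ 2)) x
      = ∑ j, (2 * (pd i (pd j l) x) ^ 2 + 2 * (pd j l x * pd i (pd i (pd j l)) x)) := by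
    intro i
    rw [e1 i]
    have e2 : (fun y => 2 * ∑ j, pd j l y * pd i (pd j l) y)
        = fun y => 2 * ∑ j, pd j l y * pd i (pd j l) y := rfl
    have hd : ∀ j : Fin n, DifferentiableAt ℝ (fun y => pd j l y * pd i (pd j l) y) x :=
      fun j => ((contDiff_pd hl j).differentiable (by simp) x).mul
        ((contDiff_pd (contDiff_pd hl j) i).differentiable (by simp) x)
    rw [pd_const_mul (DifferentiableAt.fun_sum fun j _ => hd j) 2 i,
      pd_sum Finset.univ (fun j _ => hd j) i, Finset.mul_sum]
    refine Finset.sum_congr rfl fun j _ => ?_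
    rw [pd_mul ((contDiff_pd hl j).differentiable (by simp) x)
      ((contDiff_pd (contDiff_pd hl j) i).differentiable (by simp) x) i]
    ring
  have : lap (fun y => ∑ j, (pd j l y) ^ 2) x
      = ∑ i, ∑ j, (2 * (pd i (pd j l) x) ^ 2 + 2 * (pd j l x * pd i (pd i (pd j l)) x)) :=
    Finset.sum_congr rfl fun i _ => step i
  rw [this]
  -- split and symmetrize
  have hsplit : ∑ i, ∑ j, (2 * (pd i (pd j l) x) ^ 2 + 2 * (pd j l x * pd i (pd i (pd j l)) x))
      = 2 * (∑ i, ∑ j, (pd i (pd j l) x) ^ 2)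
        + 2 * (∑ i, ∑ j, pd j l x * pd i (pd i (pd j l)) x) := by
    rw [Finset.mul_sum, Finset.mul_sum, ← Finset.sum_add_distrib]
    refine Finset.sum_congr rfl fun i _ => ?_
    rw [Finset.mul_sum, Finset.mul_sum, ← Finset.sum_add_distrib]
  rw [hsplit]
  congr 1
  congr 1
  -- third-derivative symmetry
  have hsym : ∀ i j : Fin n, pd j l x * pd i (pd i (pd j l)) x
      = pd j l x * pd j (pd i (pd i l)) x := fun i j => by rw [pd3_comm hl i j x]
  calc ∑ i, ∑ j, pd j l x * pd i (pd i (pd j l)) x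
      = ∑ i, ∑ j, pd j l x * pd j (pd i (pd i l)) x :=
        Finset.sum_congr rfl fun i _ => Finset.sum_congr rfl fun j _ => hsym i j
    _ = ∑ j, ∑ i, pd j l x * pd j (pd i (pd i l)) x := Finset.sum_comm
    _ = ∑ i, ∑ j, pd i l x * pd i (pd j (pd j l)) x := rfl

lemma lap_lapfun (hl : ContDiff ℝ (∞ : WithTop ℕ∞) l) (x : Fin n → ℝ) :
    lap (fun y => lap l y) x = ∑ i, ∑ j, pd i (pd i (pd j (pd j l))) x := by
  have e1 : ∀ i : Fin n, pd i (fun y => lap l y) = fun y => ∑ j, pd i (pd j (pd j l)) y :=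
    fun i => funext fun y => pd_lapfun hl i y
  refine Finset.sum_congr rfl fun i _ => ?_
  rw [e1 i, pd_sum Finset.univ
    (fun j _ => (contDiff_pd (contDiff_pd (contDiff_pd hl j) j) i).differentiable (by simp) x) i]

lemma pd_comb {f g : (Fin n → ℝ) → ℝ} (hf : ContDiff ℝ (∞ : WithTop ℕ∞) f)
    (hg : ContDiff ℝ (∞ : WithTop ℕ∞) g) (a b : ℝ) (k : Fin n) (x : Fin n → ℝ) :
    pd k (fun y => a * f y - b * g y) x = a * pd k f x - b * pd k g x := by
  rw [pd_sub ((hf.differentiable (by simp) x).const_mul a)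
    ((hg.differentiable (by simp) x).const_mul b) k,
    pd_const_mul (hf.differentiable (by simp) x) a k,
    pd_const_mul (hg.differentiable (by simp) x) b k]

lemma lap_comb {f g : (Fin n → ℝ) → ℝ} (hf : ContDiff ℝ (∞ : WithTop ℕ∞) f)
    (hg : ContDiff ℝ (∞ : WithTop ℕ∞) g) (a b : ℝ) (x : Fin n → ℝ) :
    lap (fun y => a * f y - b * g y) x = a * lap f x - b * lap g x := by
  have e : ∀ i : Fin n, pd i (fun y => a * f y - b * g y)
      = fun y => a * pd i f y - b * pd i g y :=
    fun i => funext fun y => pd_comb hf hg a b i y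
  have step : ∀ i : Fin n, pd i (pd i (fun y => a * f y - b * g y)) x
      = a * pd i (pd i f) x - b * pd i (pd i g) x := by
    intro i
    rw [e i]
    exact pd_comb (contDiff_pd hf i) (contDiff_pd hg i) a b i x
  have : lap (fun y => a * f y - b * g y) x
      = ∑ i, (a * pd i (pd i f) x - b * pd i (pd i g) x) :=
    Finset.sum_congr rfl fun i _ => step i
  rw [this, Finset.sum_sub_distrib, ← Finset.mul_sum, ← Finset.mul_sum]
  rfl
end SpatialExp
section Assemble
variable {n : ℕ} {s c q : ℝ} {u : ℝ → (Fin n → ℝ) → ℝ} {t : ℝ} {x : Fin n → ℝ}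

lemma H_slice_fun (hu : ContDiff ℝ (∞ : WithTop ℕ∞) (fun p : ℝ × (Fin n → ℝ) => u p.1 p.2))
    (hpos : ∀ t x, 0 ≤ t → 0 < u t x)
    (hpde : ∀ t x, 0 ≤ t →
      deriv (fun τ => u τ x) t = lap (u t) x + c * u t x * (1 - u t x))
    (hq : 0 < q) (ht : 0 ≤ t) :
    Hfun (s * q ^ 2) (s * q) c q u t
      = fun y => q ^ 2 * ((1 - s) * (∑ j, (pd j (fun y' => Real.log (u t y')) y) ^ 2)
          - s * lap (fun y' => Real.log (u t y')) y) := by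
  funext y
  have hopen : IsOpen {p : ℝ × (Fin n → ℝ) | 0 < u p.1 p.2} :=
    isOpen_lt continuous_const hu.continuous
  have hnear : ∀ᶠ p : ℝ × (Fin n → ℝ) in 𝓝 (t, y), 0 < u p.1 p.2 :=
    eventually_of_mem (hopen.mem_nhds (hpos t y ht)) fun p hp => hp
  rw [H_point hu hq hnear, keypde hu hpos hpde ht y]
  ring

lemma pd_H_slice (hu : ContDiff ℝ (∞ : WithTop ℕ∞) (fun p : ℝ × (Fin n → ℝ) => u p.1 p.2))
    (hpos : ∀ t x, 0 ≤ t → 0 < u t x)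
    (hpde : ∀ t x, 0 ≤ t →
      deriv (fun τ => u τ x) t = lap (u t) x + c * u t x * (1 - u t x))
    (hq : 0 < q) (ht : 0 ≤ t) (i : Fin n) :
    pd i (Hfun (s * q ^ 2) (s * q) c q u t) x
      = (q ^ 2 * (1 - s)) * (2 * ∑ j, pd j (fun y' => Real.log (u t y')) x
            * pd i (pd j (fun y' => Real.log (u t y'))) x)
        - (q ^ 2 * s) * ∑ j, pd i (pd j (pd j (fun y' => Real.log (u t y')))) x := by
  have hl : ContDiff ℝ (∞ : WithTop ℕ∞) (fun y' => Real.log (u t y')) :=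
    logslice_contDiff hu (fun y => hpos t y ht)
  rw [H_slice_fun hu hpos hpde hq ht]
  have e : (fun y => q ^ 2 * ((1 - s) * (∑ j, (pd j (fun y' => Real.log (u t y')) y) ^ 2)
        - s * lap (fun y' => Real.log (u t y')) y))
      = fun y => (q ^ 2 * (1 - s)) * (∑ j, (pd j (fun y' => Real.log (u t y')) y) ^ 2)
        - (q ^ 2 * s) * lap (fun y' => Real.log (u t y')) y := funext fun y => by ring
  rw [e, pd_comb (contDiff_sumsq hl) (contDiff_lapfun hl) _ _ i x,
    pd_sumsq hl i x, pd_lapfun hl i x]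

lemma lap_H_slice (hu : ContDiff ℝ (∞ : WithTop ℕ∞) (fun p : ℝ × (Fin n → ℝ) => u p.1 p.2))
    (hpos : ∀ t x, 0 ≤ t → 0 < u t x)
    (hpde : ∀ t x, 0 ≤ t →
      deriv (fun τ => u τ x) t = lap (u t) x + c * u t x * (1 - u t x))
    (hq : 0 < q) (ht : 0 ≤ t) :
    lap (Hfun (s * q ^ 2) (s * q) c q u t) x
      = q ^ 2 * ((1 - s) * (2 * (∑ i, ∑ j, (pd i (pd j (fun y' => Real.log (u t y'))) x) ^ 2)
            + 2 * (∑ i, ∑ j, pd i (fun y' => Real.log (u t y')) x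
                * pd i (pd j (pd j (fun y' => Real.log (u t y')))) x))
          - s * ∑ i, ∑ j, pd i (pd i (pd j (pd j (fun y' => Real.log (u t y'))))) x) := by
  have hl : ContDiff ℝ (∞ : WithTop ℕ∞) (fun y' => Real.log (u t y')) :=
    logslice_contDiff hu (fun y => hpos t y ht)
  rw [H_slice_fun hu hpos hpde hq ht]
  have e : (fun y => q ^ 2 * ((1 - s) * (∑ j, (pd j (fun y' => Real.log (u t y')) y) ^ 2)
        - s * lap (fun y' => Real.log (u t y')) y))
      = fun y => (q ^ 2 * (1 - s)) * (∑ j, (pd j (fun y' => Real.log (u t y')) y) ^ 2)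
        - (q ^ 2 * s) * lap (fun y' => Real.log (u t y')) y := funext fun y => by ring
  rw [e, lap_comb (contDiff_sumsq hl) (contDiff_lapfun hl) _ _ x,
    lap_sumsq hl x, lap_lapfun hl x]
  ring
end Assemble
section Assemble2
variable {n : ℕ} {s c q : ℝ} {u : ℝ → (Fin n → ℝ) → ℝ} {t : ℝ} {x : Fin n → ℝ}

lemma pd_Lt (hu : ContDiff ℝ (∞ : WithTop ℕ∞) (fun p : ℝ × (Fin n → ℝ) => u p.1 p.2))
    (hpos : ∀ t x, 0 ≤ t → 0 < u t x)
    (hpde : ∀ t x, 0 ≤ t →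
      deriv (fun τ => u τ x) t = lap (u t) x + c * u t x * (1 - u t x))
    (ht : 0 ≤ t) (j : Fin n) (y : Fin n → ℝ) :
    pd j (fun y' => deriv (fun σ => Real.log (u σ y')) t) y
      = (∑ i, pd j (pd i (pd i (fun y' => Real.log (u t y')))) y)
        + 2 * (∑ i, pd i (fun y' => Real.log (u t y')) y
            * pd j (pd i (fun y' => Real.log (u t y'))) y)
        + c * (0 - u t y * pd j (fun y' => Real.log (u t y')) y) := by
  have hl : ContDiff ℝ (∞ : WithTop ℕ∞) (fun y' => Real.log (u t y')) :=
    logslice_contDiff hu (fun y' => hpos t y' ht)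
  have e : (fun y' => deriv (fun σ => Real.log (u σ y')) t)
      = fun y' => (lap (fun y'' => Real.log (u t y'')) y'
          + ∑ i, (pd i (fun y'' => Real.log (u t y'')) y') ^ 2) + c * (1 - u t y') :=
    funext fun y' => keypde hu hpos hpde ht y'
  have d1 : DifferentiableAt ℝ (fun y' => lap (fun y'' => Real.log (u t y'')) y'
      + ∑ i, (pd i (fun y'' => Real.log (u t y'')) y') ^ 2) y :=
    ((contDiff_lapfun hl).differentiable (by simp) y).add
      ((contDiff_sumsq hl).differentiable (by simp) y)
  have d2 : DifferentiableAt ℝ (fun y' => c * (1 - u t y')) y :=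
    (((differentiableAt_const (1:ℝ)).sub
      ((udiff_slice hu t).differentiable (by simp) y)).const_mul c)
  have d3 : DifferentiableAt ℝ (fun y' => (1:ℝ) - u t y') y :=
    (differentiableAt_const (1:ℝ)).sub ((udiff_slice hu t).differentiable (by simp) y)
  rw [e, pd_add d1 d2 j,
    pd_add ((contDiff_lapfun hl).differentiable (by simp) y)
      ((contDiff_sumsq hl).differentiable (by simp) y) j,
    pd_lapfun hl j y, pd_sumsq hl j y, pd_const_mul d3 c j,
    pd_sub (differentiableAt_const (1:ℝ)) ((udiff_slice hu t).differentiable (by simp) y) j,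
    pd_const (1:ℝ) y j, pd_u_slice hu (fun y' => hpos t y' ht) j y]

lemma time_sum1 (hu : ContDiff ℝ (∞ : WithTop ℕ∞) (fun p : ℝ × (Fin n → ℝ) => u p.1 p.2))
    (hpos : ∀ t x, 0 ≤ t → 0 < u t x)
    (hpde : ∀ t x, 0 ≤ t →
      deriv (fun τ => u τ x) t = lap (u t) x + c * u t x * (1 - u t x))
    (ht : 0 ≤ t) :
    ∑ j, pd j (fun y' => Real.log (u t y')) x
        * pd j (fun y' => deriv (fun σ => Real.log (u σ y')) t) x
      = (∑ i, ∑ j, pd i (fun y' => Real.log (u t y')) x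
            * pd i (pd j (pd j (fun y' => Real.log (u t y')))) x)
        + 2 * (∑ i, ∑ j, pd i (fun y' => Real.log (u t y')) x
            * (pd j (fun y' => Real.log (u t y')) x
              * pd i (pd j (fun y' => Real.log (u t y'))) x))
        - c * u t x * ∑ i, (pd i (fun y' => Real.log (u t y')) x) ^ 2 := by
  have step : ∑ j, pd j (fun y' => Real.log (u t y')) x
        * pd j (fun y' => deriv (fun σ => Real.log (u σ y')) t) x
      = ∑ j, ((∑ i, pd j (fun y' => Real.log (u t y')) x
            * pd j (pd i (pd i (fun y' => Real.log (u t y')))) x)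
          + 2 * (∑ i, pd j (fun y' => Real.log (u t y')) x
            * (pd i (fun y' => Real.log (u t y')) x
              * pd j (pd i (fun y' => Real.log (u t y'))) x))
          - c * u t x * (pd j (fun y' => Real.log (u t y')) x) ^ 2) := by
    refine Finset.sum_congr rfl fun j _ => ?_
    rw [pd_Lt hu hpos hpde ht j x, ← Finset.mul_sum, ← Finset.mul_sum]
    ring
  rw [step, Finset.sum_sub_distrib, Finset.sum_add_distrib, ← Finset.mul_sum,
    ← Finset.mul_sum]

lemma time_sum2 (hu : ContDiff ℝ (∞ : WithTop ℕ∞) (fun p : ℝ × (Fin n → ℝ) => u p.1 p.2))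
    (hpos : ∀ t x, 0 ≤ t → 0 < u t x)
    (hpde : ∀ t x, 0 ≤ t →
      deriv (fun τ => u τ x) t = lap (u t) x + c * u t x * (1 - u t x))
    (ht : 0 ≤ t) :
    ∑ j, pd j (pd j (fun y' => deriv (fun σ => Real.log (u σ y')) t)) x
      = (∑ i, ∑ j, pd i (pd i (pd j (pd j (fun y' => Real.log (u t y'))))) x)
        + 2 * (∑ i, ∑ j, (pd i (pd j (fun y' => Real.log (u t y'))) x) ^ 2)
        + 2 * (∑ i, ∑ j, pd i (fun y' => Real.log (u t y')) x
            * pd i (pd j (pd j (fun y' => Real.log (u t y')))) x)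
        - c * u t x * ((∑ i, pd i (pd i (fun y' => Real.log (u t y'))) x)
            + ∑ i, (pd i (fun y' => Real.log (u t y')) x) ^ 2) := by
  have hl : ContDiff ℝ (∞ : WithTop ℕ∞) (fun y' => Real.log (u t y')) :=
    logslice_contDiff hu (fun y' => hpos t y' ht)
  have hud : Differentiable ℝ (u t) := (udiff_slice hu t).differentiable (by simp)
  have epd : ∀ j : Fin n, pd j (fun y' => deriv (fun σ => Real.log (u σ y')) t)
      = fun y => (∑ i, pd j (pd i (pd i (fun y' => Real.log (u t y')))) y)
        + 2 * (∑ i, pd i (fun y' => Real.log (u t y')) y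
            * pd j (pd i (fun y' => Real.log (u t y'))) y)
        + c * (0 - u t y * pd j (fun y' => Real.log (u t y')) y) :=
    fun j => funext fun y => pd_Lt hu hpos hpde ht j y
  have step : ∀ j : Fin n, pd j (pd j (fun y' => deriv (fun σ => Real.log (u σ y')) t)) x
      = (∑ i, pd j (pd j (pd i (pd i (fun y' => Real.log (u t y'))))) x)
        + 2 * (∑ i, ((pd j (pd i (fun y' => Real.log (u t y'))) x) ^ 2
            + pd i (fun y' => Real.log (u t y')) x
              * pd i (pd j (pd j (fun y' => Real.log (u t y')))) x))
        + c * (0 - (u t x * pd j (pd j (fun y' => Real.log (u t y'))) x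
            + pd j (fun y' => Real.log (u t y')) x
              * (u t x * pd j (fun y' => Real.log (u t y')) x))) := by
    intro j
    have da : ∀ i : Fin n, DifferentiableAt ℝ
        (pd j (pd i (pd i (fun y' => Real.log (u t y'))))) x := fun i =>
      (contDiff_pd (contDiff_pd (contDiff_pd hl i) i) j).differentiable (by simp) x
    have dbi : ∀ i : Fin n, DifferentiableAt ℝ
        (fun y => pd i (fun y' => Real.log (u t y')) y
          * pd j (pd i (fun y' => Real.log (u t y'))) y) x := fun i =>
      ((contDiff_pd hl i).differentiable (by simp) x).mul
        ((contDiff_pd (contDiff_pd hl i) j).differentiable (by simp) x)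
    have d1 : DifferentiableAt ℝ
        (fun y => ∑ i, pd j (pd i (pd i (fun y' => Real.log (u t y')))) y) x :=
      DifferentiableAt.fun_sum fun i _ =>
        (contDiff_pd (contDiff_pd (contDiff_pd hl i) i) j).differentiable (by simp) x
    have d2 : DifferentiableAt ℝ
        (fun y => 2 * ∑ i, pd i (fun y' => Real.log (u t y')) y
          * pd j (pd i (fun y' => Real.log (u t y'))) y) x :=
      (DifferentiableAt.fun_sum fun i _ => dbi i).const_mul 2
    have dmul : DifferentiableAt ℝ
        (fun y => u t y * pd j (fun y' => Real.log (u t y')) y) x :=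
      (hud x).mul ((contDiff_pd hl j).differentiable (by simp) x)
    have d3 : DifferentiableAt ℝ
        (fun y => c * (0 - u t y * pd j (fun y' => Real.log (u t y')) y)) x :=
      ((differentiableAt_const (0:ℝ)).sub dmul).const_mul c
    rw [epd j, pd_add (d1.fun_add d2) d3 j, pd_add d1 d2 j,
      pd_sum Finset.univ (fun i _ => da i) j,
      pd_const_mul (DifferentiableAt.fun_sum fun i _ => dbi i) 2 j,
      pd_sum Finset.univ (fun i _ => dbi i) j,
      pd_const_mul ((differentiableAt_const (0:ℝ)).fun_sub dmul) c j,
      pd_sub (differentiableAt_const (0:ℝ)) dmul j, pd_const (0:ℝ) x j,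
      pd_mul (hud x) ((contDiff_pd hl j).differentiable (by simp) x) j,
      pd_u_slice hu (fun y' => hpos t y' ht) j x]
    congr 1
    rw [Finset.mul_sum, Finset.mul_sum]
    refine congrArg _ (Finset.sum_congr rfl fun i _ => ?_)
    rw [pd_mul ((contDiff_pd hl i).differentiable (by simp) x)
      ((contDiff_pd (contDiff_pd hl i) j).differentiable (by simp) x) j,
      pd3_comm hl j i x]
    ring
  have big : ∑ j, pd j (pd j (fun y' => deriv (fun σ => Real.log (u σ y')) t)) x
      = ∑ j, ((∑ i, pd j (pd j (pd i (pd i (fun y' => Real.log (u t y'))))) x)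
          + 2 * (∑ i, (pd j (pd i (fun y' => Real.log (u t y'))) x) ^ 2)
          + 2 * (∑ i, pd i (fun y' => Real.log (u t y')) x
              * pd i (pd j (pd j (fun y' => Real.log (u t y')))) x)
          - (c * u t x * pd j (pd j (fun y' => Real.log (u t y'))) x
            + c * u t x * (pd j (fun y' => Real.log (u t y')) x) ^ 2)) := by
    refine Finset.sum_congr rfl fun j _ => ?_
    rw [step j, Finset.sum_add_distrib]
    ring
  rw [big]
  rw [show ∀ (f g h k : Fin n → ℝ), ∑ j, (f j + g j + h j - k j)
      = ((∑ j, f j) + (∑ j, g j) + (∑ j, h j)) - ∑ j, k j from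
    fun f g h k => by rw [Finset.sum_sub_distrib, Finset.sum_add_distrib,
      Finset.sum_add_distrib]]
  rw [← Finset.mul_sum, ← Finset.mul_sum]
  have hcomm : ∑ j, ∑ i, pd i (fun y' => Real.log (u t y')) x
      * pd i (pd j (pd j (fun y' => Real.log (u t y')))) x
      = ∑ i, ∑ j, pd i (fun y' => Real.log (u t y')) x
        * pd i (pd j (pd j (fun y' => Real.log (u t y')))) x := Finset.sum_comm
  rw [hcomm, Finset.sum_add_distrib, ← Finset.mul_sum, ← Finset.mul_sum]
  ring
end Assemble2

section Final
variable {n : ℕ} {s c q ε N : ℝ} {u : ℝ → (Fin n → ℝ) → ℝ} {t : ℝ} {x : Fin n → ℝ}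

lemma key_scalar (n : ℕ) (hn : 1 ≤ n) {ε N T y SB : ℝ} (hε0 : 0 < ε) (hε1 : ε < 1)
    (hN : (n : ℝ) < N) (hSB : T ^ 2 ≤ n * SB) :
    2 * (1 - ε) / (N - ε * (N - (n : ℝ))) * (y - T) ^ 2 - 2 * (1 / ε - 1) * y ^ 2
      ≤ 2 * SB := by
  have hn' : (1 : ℝ) ≤ (n : ℝ) := by exact_mod_cast hn
  have hDpos : 0 < N - ε * (N - (n : ℝ)) := by nlinarith
  have hDge : ε + (n : ℝ) * (1 - ε) ≤ N - ε * (N - (n : ℝ)) := by nlinarith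
  have hA : ε ≤ N - ε * (N - (n : ℝ)) - (n : ℝ) * (1 - ε) := by nlinarith
  have hB : (n : ℝ) * (1 - ε) ≤ N - ε * (N - (n : ℝ)) - ε := by nlinarith
  set D := N - ε * (N - (n : ℝ)) with hD
  have hprod : ε * ((n : ℝ) * (1 - ε)) ≤ (D - (n : ℝ) * (1 - ε)) * (D - ε) :=
    mul_le_mul hA hB (by nlinarith) (by nlinarith)
  have heq : 2 * (1 - ε) / D * (y - T) ^ 2 - 2 * (1 / ε - 1) * y ^ 2
      = (2 * (1 - ε) * (y - T) ^ 2 * ε - 2 * (1 - ε) * y ^ 2 * D) / (D * ε) := by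
    field_simp
  rw [heq, div_le_iff₀ (by positivity)]
  have hApos : 0 < ε * (D - (n : ℝ) * (1 - ε)) := by nlinarith
  have hnpos : (0 : ℝ) < (n : ℝ) := by linarith
  have hnA : 0 < (n : ℝ) * (ε * (D - (n : ℝ) * (1 - ε))) := mul_pos hnpos hApos
  have t1 : 0 ≤ (ε * (D - (n : ℝ) * (1 - ε)) * (D * ε)) * ((n : ℝ) * SB - T ^ 2) :=
    mul_nonneg (mul_nonneg hApos.le (mul_pos hDpos hε0).le) (by linarith)
  have t2 : 0 ≤ (ε * (D - (n : ℝ) * (1 - ε)) * T + (n : ℝ) * ε * (1 - ε) * y) ^ 2 :=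
    sq_nonneg _
  have t3 : 0 ≤ ((n : ℝ) * ε * (1 - ε))
      * (((D - (n : ℝ) * (1 - ε)) * (D - ε) - ε * ((n : ℝ) * (1 - ε))) * y ^ 2) := by
    apply mul_nonneg (mul_nonneg (mul_nonneg (by linarith) hε0.le) (by linarith))
    exact mul_nonneg (by linarith) (sq_nonneg y)
  nlinarith [t1, t2, t3, hnA]

lemma grad_sum (hu : ContDiff ℝ (∞ : WithTop ℕ∞) (fun p : ℝ × (Fin n → ℝ) => u p.1 p.2))
    (hpos : ∀ t x, 0 ≤ t → 0 < u t x)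
    (hpde : ∀ t x, 0 ≤ t →
      deriv (fun τ => u τ x) t = lap (u t) x + c * u t x * (1 - u t x))
    (hq : 0 < q) (ht : 0 ≤ t) :
    (∑ i, pd i (Hfun (s * q ^ 2) (s * q) c q u t) x
        * pd i (fun y => Real.log (Wfun q u t y)) x)
      = -q ^ 3 * (2 * (1 - s) * (∑ i, ∑ j, pd i (fun y' => Real.log (u t y')) x * (pd j (fun y' => Real.log (u t y')) x * pd i (pd j (fun y' => Real.log (u t y'))) x)) - s * (∑ i, ∑ j, pd i (fun y' => Real.log (u t y')) x * pd i (pd j (pd j (fun y' => Real.log (u t y')))) x)) := by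
  have hl : ContDiff ℝ (∞ : WithTop ℕ∞) (fun y' => Real.log (u t y')) :=
    logslice_contDiff hu (fun y' => hpos t y' ht)
  have hlogW : ∀ i : Fin n, pd i (fun y => Real.log (Wfun q u t y)) x
      = -q * pd i (fun y' => Real.log (u t y')) x := by
    intro i
    have e : (fun y => Real.log (Wfun q u t y)) = fun y => -q * Real.log (u t y) :=
      funext fun y => by rw [Wfun, Real.log_rpow (hpos t y ht)]
    rw [e, pd_const_mul (hl.differentiable (by simp) x) (-q) i]
  have step : (∑ i, pd i (Hfun (s * q ^ 2) (s * q) c q u t) x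
        * pd i (fun y => Real.log (Wfun q u t y)) x)
      = ∑ i, ((-(q ^ 3) * (2 * (1 - s)))
            * (∑ j, pd i (fun y' => Real.log (u t y')) x * (pd j (fun y' => Real.log (u t y')) x * pd i (pd j (fun y' => Real.log (u t y'))) x))
          + (q ^ 3 * s) * (∑ j, pd i (fun y' => Real.log (u t y')) x * pd i (pd j (pd j (fun y' => Real.log (u t y')))) x)) := by
    refine Finset.sum_congr rfl fun i _ => ?_
    rw [pd_H_slice hu hpos hpde hq ht i, hlogW i, ← Finset.mul_sum, ← Finset.mul_sum]
    ring
  rw [step, Finset.sum_add_distrib, ← Finset.mul_sum, ← Finset.mul_sum]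
  ring

end Final

set_option maxHeartbeats 4000000 in
/-- Euclidean specialization of Lemma 3.2 (the weighted Ricci curvature term vanishes on
Euclidean space). -/
theorem fisher_kpp_H_differential_inequality (n : ℕ) (hn : 1 ≤ n)
    (c s q ε N : ℝ) (hc : 0 < c) (hs : 1 < s) (hq : 0 < q)
    (hε0 : 0 < ε) (hε1 : ε < 1) (hN : (n : ℝ) < N)
    (u : ℝ → (Fin n → ℝ) → ℝ)
    (hu : ContDiff ℝ (⊤ : ℕ∞) (fun p : ℝ × (Fin n → ℝ) => u p.1 p.2))
    (hpos : ∀ t x, 0 ≤ t → 0 < u t x)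
    (hpde : ∀ t x, 0 ≤ t →
      deriv (fun τ => u τ x) t = lap (u t) x + c * u t x * (1 - u t x)) :
    ∀ t x, 0 ≤ t →
      lap (Hfun (s * q ^ 2) (s * q) c q u t) x
          - deriv (fun τ => Hfun (s * q ^ 2) (s * q) c q u τ x) t ≥
        ((2 * (1 - ε) / (N - ε * (N - (n : ℝ)))) * ((s * q + s - 1) ^ 2 / (s ^ 2 * q ^ 2))
              - 2 * (1 / ε - 1))
            * ((∑ i, (pd i (Wfun q u t) x) ^ 2) ^ 2 / (Wfun q u t x) ^ 4)
          + (2 * (1 - ε) / (N - ε * (N - (n : ℝ)))) * (1 / (s ^ 2 * q ^ 2))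
              * (Hfun (s * q ^ 2) (s * q) c q u t x) ^ 2
          + (4 * (1 - ε) / (N - ε * (N - (n : ℝ)))) * ((s * q + s - 1) / (s ^ 2 * q ^ 2))
              * Hfun (s * q ^ 2) (s * q) c q u t x
              * ((∑ i, (pd i (Wfun q u t) x) ^ 2) / (Wfun q u t x) ^ 2)
          + (2 / q) * (∑ i, pd i (Hfun (s * q ^ 2) (s * q) c q u t) x
              * pd i (fun y => Real.log (Wfun q u t y)) x)
          + (c - 2 * c * s) * (Wfun q u t x ^ (-1 / q : ℝ))
              * ((∑ i, (pd i (Wfun q u t) x) ^ 2) / (Wfun q u t x) ^ 2)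
          + c * (Wfun q u t x ^ (-1 / q : ℝ)) * Hfun (s * q ^ 2) (s * q) c q u t x := by
  intro t x ht
  have hu' : ContDiff ℝ (∞ : WithTop ℕ∞) (fun p : ℝ × (Fin n → ℝ) => u p.1 p.2) :=
    hu.of_le (by simp)
  have hU : 0 < u t x := hpos t x ht
  have hW : 0 < Wfun q u t x := Real.rpow_pos_of_pos hU _
  have hl : ContDiff ℝ (∞ : WithTop ℕ∞) (fun y' => Real.log (u t y')) :=
    logslice_contDiff hu' (fun y' => hpos t y' ht)
  have hnear : ∀ᶠ p : ℝ × (Fin n → ℝ) in 𝓝 (t, x), 0 < u p.1 p.2 :=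
    eventually_of_mem ((isOpen_lt continuous_const hu'.continuous).mem_nhds
      (hpos t x ht)) fun p hp => hp
  -- value identities
  have eqU : Wfun q u t x ^ (-1 / q : ℝ) = u t x := W_rpow_inv hU hq
  have eqW : (∑ i, (pd i (Wfun q u t) x) ^ 2)
      = q ^ 2 * (∑ i, (pd i (fun y' => Real.log (u t y')) x) ^ 2) * Wfun q u t x ^ 2 := by
    have h1 : (∑ i, (pd i (Wfun q u t) x) ^ 2)
        = ∑ i, (q ^ 2 * (pd i (fun y' => Real.log (u t y')) x) ^ 2 * Wfun q u t x ^ 2) :=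
      Finset.sum_congr rfl fun i _ => by rw [pd_W_slice hu' hnear q i]; ring
    rw [h1, ← Finset.sum_mul, ← Finset.mul_sum]
  have eqH : Hfun (s * q ^ 2) (s * q) c q u t x
      = q ^ 2 * ((1 - s) * (∑ i, (pd i (fun y' => Real.log (u t y')) x) ^ 2) - s * (∑ i, pd i (pd i (fun y' => Real.log (u t y'))) x)) :=
    congrFun (H_slice_fun hu' hpos hpde hq ht) x
  have eqL : lap (Hfun (s * q ^ 2) (s * q) c q u t) x
      = q ^ 2 * ((1 - s) * (2 * (∑ i, ∑ j, (pd i (pd j (fun y' => Real.log (u t y'))) x) ^ 2) + 2 * (∑ i, ∑ j, pd i (fun y' => Real.log (u t y')) x * pd i (pd j (pd j (fun y' => Real.log (u t y')))) x)) - s * (∑ i, ∑ j, pd i (pd i (pd j (pd j (fun y' => Real.log (u t y'))))) x)) :=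
    lap_H_slice hu' hpos hpde hq ht
  have eqT : deriv (fun τ => Hfun (s * q ^ 2) (s * q) c q u τ x) t
      = q ^ 2 * (2 * (1 - s) * ((∑ i, ∑ j, pd i (fun y' => Real.log (u t y')) x * pd i (pd j (pd j (fun y' => Real.log (u t y')))) x) + 2 * (∑ i, ∑ j, pd i (fun y' => Real.log (u t y')) x * (pd j (fun y' => Real.log (u t y')) x * pd i (pd j (fun y' => Real.log (u t y'))) x)) - c * u t x * (∑ i, (pd i (fun y' => Real.log (u t y')) x) ^ 2))
          - s * ((∑ i, ∑ j, pd i (pd i (pd j (pd j (fun y' => Real.log (u t y'))))) x) + 2 * (∑ i, ∑ j, (pd i (pd j (fun y' => Real.log (u t y'))) x) ^ 2) + 2 * (∑ i, ∑ j, pd i (fun y' => Real.log (u t y')) x * pd i (pd j (pd j (fun y' => Real.log (u t y')))) x) - c * u t x * ((∑ i, pd i (pd i (fun y' => Real.log (u t y'))) x) + (∑ i, (pd i (fun y' => Real.log (u t y')) x) ^ 2)))) := by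
    rw [deriv_H_time hu' hpos hpde hq ht, time_sum1 hu' hpos hpde ht,
      time_sum2 hu' hpos hpde ht]
  have hgrad : (2 / q) * (∑ i, pd i (Hfun (s * q ^ 2) (s * q) c q u t) x
        * pd i (fun y => Real.log (Wfun q u t y)) x)
      = -2 * q ^ 2 * (2 * (1 - s) * (∑ i, ∑ j, pd i (fun y' => Real.log (u t y')) x * (pd j (fun y' => Real.log (u t y')) x * pd i (pd j (fun y' => Real.log (u t y'))) x)) - s * (∑ i, ∑ j, pd i (fun y' => Real.log (u t y')) x * pd i (pd j (pd j (fun y' => Real.log (u t y')))) x)) := by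
    rw [grad_sum hu' hpos hpde hq ht]
    field_simp
  have hdiv1 : (q ^ 2 * (∑ i, (pd i (fun y' => Real.log (u t y')) x) ^ 2) * Wfun q u t x ^ 2) ^ 2 / (Wfun q u t x) ^ 4
      = q ^ 4 * (∑ i, (pd i (fun y' => Real.log (u t y')) x) ^ 2) ^ 2 := by
    field_simp [hW.ne']
  have hdiv2 : q ^ 2 * (∑ i, (pd i (fun y' => Real.log (u t y')) x) ^ 2) * Wfun q u t x ^ 2 / (Wfun q u t x) ^ 2
      = q ^ 2 * (∑ i, (pd i (fun y' => Real.log (u t y')) x) ^ 2) := by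
    field_simp [hW.ne']
  -- Cauchy–Schwarz for the Hessian
  have hSB : (∑ i, pd i (pd i (fun y' => Real.log (u t y'))) x) ^ 2 ≤ (n : ℝ) * (∑ i, ∑ j, (pd i (pd j (fun y' => Real.log (u t y'))) x) ^ 2) := by
    have h1 : (∑ i, pd i (pd i (fun y' => Real.log (u t y'))) x) ^ 2 ≤ (n : ℝ) * ∑ i, (pd i (pd i (fun y' => Real.log (u t y'))) x) ^ 2 := by
      have h := sq_sum_le_card_mul_sum_sq (s := Finset.univ)
        (f := fun i : Fin n => pd i (pd i (fun y' => Real.log (u t y'))) x)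
      simpa using h
    have h2 : (∑ i, (pd i (pd i (fun y' => Real.log (u t y'))) x) ^ 2) ≤ (∑ i, ∑ j, (pd i (pd j (fun y' => Real.log (u t y'))) x) ^ 2) :=
      Finset.sum_le_sum fun i _ =>
        Finset.single_le_sum (f := fun j => (pd i (pd j (fun y' => Real.log (u t y'))) x) ^ 2)
          (fun j _ => sq_nonneg _) (Finset.mem_univ i)
    have h3 : (n : ℝ) * (∑ i, (pd i (pd i (fun y' => Real.log (u t y'))) x) ^ 2) ≤ (n : ℝ) * (∑ i, ∑ j, (pd i (pd j (fun y' => Real.log (u t y'))) x) ^ 2) :=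
      mul_le_mul_of_nonneg_left h2 (Nat.cast_nonneg n)
    linarith
  have key := key_scalar n hn hε0 hε1 hN (y := q * (∑ i, (pd i (fun y' => Real.log (u t y')) x) ^ 2)) hSB
  have key2 : (2 * (1 - ε) / (N - ε * (N - (n : ℝ))) * q ^ 2 * (q * (∑ i, (pd i (fun y' => Real.log (u t y')) x) ^ 2) - (∑ i, pd i (pd i (fun y' => Real.log (u t y'))) x)) ^ 2 - 2 * (1 / ε - 1) * (q ^ 4 * (∑ i, (pd i (fun y' => Real.log (u t y')) x) ^ 2) ^ 2)) ≤ q ^ 2 * (2 * (∑ i, ∑ j, (pd i (pd j (fun y' => Real.log (u t y'))) x) ^ 2)) := by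
    have h := mul_le_mul_of_nonneg_left key (sq_nonneg q)
    nlinarith [h]
  -- rewrite the goal
  rw [eqL, eqT, eqW, hdiv1, hdiv2, hgrad, eqU, eqH]
  have expand : q ^ 2 * ((1 - s) * (2 * (∑ i, ∑ j, (pd i (pd j (fun y' => Real.log (u t y'))) x) ^ 2) + 2 * (∑ i, ∑ j, pd i (fun y' => Real.log (u t y')) x * pd i (pd j (pd j (fun y' => Real.log (u t y')))) x)) - s * (∑ i, ∑ j, pd i (pd i (pd j (pd j (fun y' => Real.log (u t y'))))) x))
      - q ^ 2 * (2 * (1 - s) * ((∑ i, ∑ j, pd i (fun y' => Real.log (u t y')) x * pd i (pd j (pd j (fun y' => Real.log (u t y')))) x) + 2 * (∑ i, ∑ j, pd i (fun y' => Real.log (u t y')) x * (pd j (fun y' => Real.log (u t y')) x * pd i (pd j (fun y' => Real.log (u t y'))) x)) - c * u t x * (∑ i, (pd i (fun y' => Real.log (u t y')) x) ^ 2))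
          - s * ((∑ i, ∑ j, pd i (pd i (pd j (pd j (fun y' => Real.log (u t y'))))) x) + 2 * (∑ i, ∑ j, (pd i (pd j (fun y' => Real.log (u t y'))) x) ^ 2) + 2 * (∑ i, ∑ j, pd i (fun y' => Real.log (u t y')) x * pd i (pd j (pd j (fun y' => Real.log (u t y')))) x) - c * u t x * ((∑ i, pd i (pd i (fun y' => Real.log (u t y'))) x) + (∑ i, (pd i (fun y' => Real.log (u t y')) x) ^ 2))))
      = q ^ 2 * (2 * (∑ i, ∑ j, (pd i (pd j (fun y' => Real.log (u t y'))) x) ^ 2)) + (-2 * q ^ 2 * (2 * (1 - s) * (∑ i, ∑ j, pd i (fun y' => Real.log (u t y')) x * (pd j (fun y' => Real.log (u t y')) x * pd i (pd j (fun y' => Real.log (u t y'))) x)) - s * (∑ i, ∑ j, pd i (fun y' => Real.log (u t y')) x * pd i (pd j (pd j (fun y' => Real.log (u t y')))) x)) + (c - 2 * c * s) * u t x * (q ^ 2 * (∑ i, (pd i (fun y' => Real.log (u t y')) x) ^ 2)) + c * u t x * (q ^ 2 * ((1 - s) * (∑ i, (pd i (fun y' => Real.log (u t y')) x) ^ 2)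 - s * (∑ i, pd i (pd i (fun y' => Real.log (u t y'))) x)))) := by ring
  have hsne : s ≠ 0 := by linarith
  have hqne : q ≠ 0 := hq.ne'
  have hDne : N - ε * (N - (n : ℝ)) ≠ 0 := by
    have hn' : (1 : ℝ) ≤ (n : ℝ) := by exact_mod_cast hn
    nlinarith
  have hRHS : ((2 * (1 - ε) / (N - ε * (N - (n : ℝ)))) * ((s * q + s - 1) ^ 2 / (s ^ 2 * q ^ 2))
              - 2 * (1 / ε - 1))
            * (q ^ 4 * (∑ i, (pd i (fun y' => Real.log (u t y')) x) ^ 2) ^ 2)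
          + (2 * (1 - ε) / (N - ε * (N - (n : ℝ)))) * (1 / (s ^ 2 * q ^ 2))
              * (q ^ 2 * ((1 - s) * (∑ i, (pd i (fun y' => Real.log (u t y')) x) ^ 2) - s * (∑ i, pd i (pd i (fun y' => Real.log (u t y'))) x))) ^ 2
          + (4 * (1 - ε) / (N - ε * (N - (n : ℝ)))) * ((s * q + s - 1) / (s ^ 2 * q ^ 2))
              * (q ^ 2 * ((1 - s) * (∑ i, (pd i (fun y' => Real.log (u t y')) x) ^ 2) - s * (∑ i, pd i (pd i (fun y' => Real.log (u t y'))) x)))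
              * (q ^ 2 * (∑ i, (pd i (fun y' => Real.log (u t y')) x) ^ 2))
          + (-2 * q ^ 2 * (2 * (1 - s) * (∑ i, ∑ j, pd i (fun y' => Real.log (u t y')) x * (pd j (fun y' => Real.log (u t y')) x * pd i (pd j (fun y' => Real.log (u t y'))) x)) - s * (∑ i, ∑ j, pd i (fun y' => Real.log (u t y')) x * pd i (pd j (pd j (fun y' => Real.log (u t y')))) x)))
          + (c - 2 * c * s) * u t x * (q ^ 2 * (∑ i, (pd i (fun y' => Real.log (u t y')) x) ^ 2))
          + c * u t x * (q ^ 2 * ((1 - s) * (∑ i, (pd i (fun y' => Real.log (u t y')) x) ^ 2) - s * (∑ i, pd i (pd i (fun y' => Real.log (u t y'))) x)))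
      = (2 * (1 - ε) / (N - ε * (N - (n : ℝ))) * q ^ 2 * (q * (∑ i, (pd i (fun y' => Real.log (u t y')) x) ^ 2) - (∑ i, pd i (pd i (fun y' => Real.log (u t y'))) x)) ^ 2 - 2 * (1 / ε - 1) * (q ^ 4 * (∑ i, (pd i (fun y' => Real.log (u t y')) x) ^ 2) ^ 2)) + (-2 * q ^ 2 * (2 * (1 - s) * (∑ i, ∑ j, pd i (fun y' => Real.log (u t y')) x * (pd j (fun y' => Real.log (u t y')) x * pd i (pd j (fun y' => Real.log (u t y'))) x)) - s * (∑ i, ∑ j, pd i (fun y' => Real.log (u t y')) x * pd i (pd j (pd j (fun y' => Real.log (u t y')))) x)) + (c - 2 * c * s) * u t x * (q ^ 2 * (∑ i, (pd i (fun y' => Real.log (u t y')) x) ^ 2)) + c * u t x * (q ^ 2 * ((1 - s) * (∑ i, (pd i (fun y' => Real.log (u t y')) x) ^ 2) - s * (∑ i, pd i (pd i (fun y' => Real.log (u t y'))) x)))) := by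
    field_simp
    ring
  rw [ge_iff_le, hRHS, expand]
  linarith [key2]
end
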